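/- arXiv:2209.01804 — 2 statements merged into one kernel-verified Lean document; each statement's English description precedes it below -/
import Mathlib

section
/- Let X be a complex Banach space, θ₀, θ₁ ∈ ℕ, θ := lcm(θ₀, θ₁), and for each n ∈ ℕ₀ and t ∈ ℤ let F_t^n : U_t → X be maps on open sets U_t ⊆ X with F_{t+θ₀}^n = F_t^n and U_{t+θ₀} = U_t. Assume: (i) each F_t^n is continuously Fréchet differentiable; (ii) for every 0 ≤ t < θ₀ the derivatives DF_t^n : U_t → L(X), n ∈ ℕ, are uniformly continuous on bounded subsets of U_t uniformly in n (for every bounded B ⊆ U_t and ε > 0 there is δ > 0 with ‖DF_t^n(u) − DF_t^n(ū)‖ ≤ ε whenever u, ū ∈ B, ‖u − ū‖ < δ, n ∈ ℕ), the family {DF_t^n}_{n∈ℕ} is equicontinuous, and for every n ∈ ℕ there exists 0 ≤ t < θ₀ such that DF_t^n(u) is a compact operator for every u ∈ U_t. Let φ⁰ = (φ_t^0)_{t∈ℤ} be a θ₁-periodic solution of u_{t+1} = F_t^0(u_t) which is weakly hyperbolic, i.e. 1 ∉ σ(Ξ_θ^0) with Ξ_θ^0 := DF_{θ−1}^0(φ_{θ−1}^0)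 ∘ ⋯ ∘ DF_0^0(φ_0^0). Suppose there is Γ₀ : [0,∞) → [0,∞) with lim_{ϱ↘0} Γ₀(ϱ) = 0 such that ‖F_t^n(φ_t^0) − F_t^0(φ_t^0)‖ ≤ Γ₀(1/n) and lim_{n→∞} ‖DF_t^n(φ_t^0) − DF_t^0(φ_t^0)‖_{L(X)} = 0 for all 0 ≤ t < θ. Then there exist ρ₀ > 0, K₀ ≥ 0 and N₀ ∈ ℕ such that for every n ≥ N₀ the equation u_{t+1} = F_t^n(u_t) has a θ-periodic solution φⁿ = (φ_t^n)_{t∈ℤ}, unique among θ-periodic solutions with sup_{t∈ℤ} ‖φ_t^n − φ_t^0‖ ≤ ρ₀, and this solution satisfies sup_{t∈ℤ} ‖φ_t^n − φ_t^0‖ ≤ K₀ Γ₀(1/n); moreover φⁿ is weakly hyperbolic, i.e. 1 ∉ σ(DF_{θ−1}^n(φ_{θ−1}^n) ∘ ⋯ ∘ DF_0^n(φ_0^n)). -/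
/-!
Since `θ₀ ∣ θ` and `θ₁ ∣ θ`, the `θ`-periodic solutions of `u_{t+1} = F_t^n(u_t)` are the
periodic extensions of the fixed points of the period map `Pₙ = F_{θ-1}^n ∘ ⋯ ∘ F_0^n`, and
`φ⁰_0` is a fixed point of `P₀` with `DP₀(φ⁰_0) = Ξ_θ^0`. Equicontinuity and pointwise
convergence make `DF_t^n` uniformly close to `DF_t^0(φ⁰_t)` on a fixed tube around `φ⁰`, which
a discrete Gronwall estimate shows the relevant trajectories never leave; by the chain rule `DPₙ`
is then close to `Ξ_θ^0` on a ball around `φ⁰_0`. So the Newton-type map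
`x ↦ x - (1 - Ξ_θ^0)⁻¹ (x - Pₙ x)` is a `1/2`-contraction of that ball which moves its centre by
`O(Γ₀(1/n))`. Its fixed point starts `φⁿ`, and `1 - DPₙ(φⁿ_0)` stays invertible as a small
perturbation of `1 - Ξ_θ^0`.
-/

open Filter Topology

/-- The period operator `Ξ_θ = A_{θ−1} ∘ ⋯ ∘ A₀` built from an integer-indexed
operator sequence. -/
noncomputable def prodOp {X : Type*} [NormedAddCommGroup X] [NormedSpace ℂ X]
    (A : ℤ → X →L[ℂ] X) : ℕ → (X →L[ℂ] X)
  | 0 => ContinuousLinearMap.id ℂ X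
  | (j + 1) => (A j).comp (prodOp A j)

open Metric Function
open Metric Function

section OperatorProducts

variable {X : Type*} [NormedAddCommGroup X] [NormedSpace ℂ X]

theorem prodOp_congr {A B : ℤ → X →L[ℂ] X} {m : ℕ} (h : ∀ j < m, A j = B j) :
    prodOp A m = prodOp B m := by
  induction m with
  | zero => rfl
  | succ m ih => rw [prodOp, prodOp, h m m.lt_succ_self, ih fun j hj => h j (by omega)]

theorem norm_prodOp_le {A : ℤ → X →L[ℂ] X} {m : ℕ} {L : ℝ} (hL : 0 ≤ L)
    (h : ∀ j < m, ‖A j‖ ≤ L) : ‖prodOp A m‖ ≤ L ^ m := by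
  induction m with
  | zero => simpa [prodOp] using ContinuousLinearMap.norm_id_le
  | succ m ih =>
    calc ‖prodOp A (m + 1)‖ ≤ ‖A m‖ * ‖prodOp A m‖ := ContinuousLinearMap.opNorm_comp_le _ _
      _ ≤ L * L ^ m := by gcongr; exacts [h m m.lt_succ_self, ih fun j hj => h j (by omega)]
      _ = L ^ (m + 1) := (pow_succ' L m).symm

theorem norm_prodOp_sub_prodOp_le {A B : ℤ → X →L[ℂ] X} {m : ℕ} {L ε : ℝ} (hL : 1 ≤ L)
    (hA : ∀ j < m, ‖A j‖ ≤ L) (hB : ∀ j < m, ‖B j‖ ≤ L) (hAB : ∀ j < m, ‖A j - B j‖ ≤ ε) :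
    ‖prodOp A m - prodOp B m‖ ≤ m * L ^ m * ε := by
  induction m with
  | zero => simp [prodOp]
  | succ m ih =>
    have ih := ih (fun j hj => hA j (by omega)) (fun j hj => hB j (by omega))
      (fun j hj => hAB j (by omega))
    have hPB := norm_prodOp_le (m := m) (zero_le_one.trans hL) fun j hj => hB j (by omega)
    have hε : 0 ≤ ε := (norm_nonneg _).trans (hAB m m.lt_succ_self)
    have hLm : L ^ m ≤ L ^ (m + 1) := pow_le_pow_right₀ hL m.le_succ
    calc ‖prodOp A (m + 1) - prodOp B (m + 1)‖
        = ‖(A m).comp (prodOp A m - prodOp B m) + (A m - B m).comp (prodOp B m)‖ := by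
          simp only [prodOp, ContinuousLinearMap.comp_sub, ContinuousLinearMap.sub_comp,
            sub_add_sub_cancel]
      _ ≤ ‖A m‖ * ‖prodOp A m - prodOp B m‖ + ‖A m - B m‖ * ‖prodOp B m‖ :=
          (norm_add_le _ _).trans (add_le_add (ContinuousLinearMap.opNorm_comp_le _ _)
            (ContinuousLinearMap.opNorm_comp_le _ _))
      _ ≤ L * (m * L ^ m * ε) + ε * L ^ m := by
          gcongr
          exacts [hA m m.lt_succ_self, hAB m m.lt_succ_self]
      _ ≤ (m + 1 : ℕ) * L ^ (m + 1) * ε := by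
          have hLLm : L * (m * L ^ m * ε) = m * L ^ (m + 1) * ε := by ring
          push_cast
          nlinarith [mul_le_mul_of_nonneg_left hLm hε]

end OperatorProducts

theorem Function.Periodic.map_emod {α : Type*} {f : ℤ → α} {c : ℤ} (hf : Periodic f c)
    (t : ℤ) : f (t % c) = f t := by
  conv_rhs => rw [← Int.emod_add_ediv_mul t c]
  exact (hf.int_mul (t / c) (t % c)).symm

theorem Function.Periodic.forall_of_forall_lt {Q : ℤ → Prop} {p : ℕ} (hQ : Periodic Q p)
    (hp : 0 < p) (h : ∀ j : ℕ, j < p → Q j) (t : ℤ) : Q t := by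
  have hlt := Int.emod_lt_of_pos t (Int.natCast_pos.2 hp)
  rw [← hQ.map_emod t, ← Int.toNat_of_nonneg (Int.emod_nonneg t (by omega))]
  exact h _ (by omega)

/-- `trajectory G j x` is the state at time `j` of the solution of `u (t + 1) = G t (u t)`
with `u 0 = x`. -/
theorem Function.Periodic.natCast_of_dvd {α : Type*} {f : ℤ → α} {m n : ℕ}
    (hf : Periodic f m) (h : m ∣ n) : Periodic f n := by
  obtain ⟨k, rfl⟩ := h
  simpa [mul_comm] using hf.nat_mul k

def trajectory {α : Type*} (G : ℤ → α → α) : ℕ → α → α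
  | 0 => id
  | (j + 1) => G j ∘ trajectory G j

/-- The `p`-periodic sequence that agrees with `trajectory G j x` for `0 ≤ j < p`. -/
def periodicTrajectory {α : Type*} (G : ℤ → α → α) (p : ℕ) (x : α) (t : ℤ) : α :=
  trajectory G (t % p).toNat x

section Trajectories

variable {α : Type*} {G : ℤ → α → α} {p : ℕ}

theorem trajectory_eq_of_solution {ψ : ℤ → α} (hψ : ∀ t, ψ (t + 1) = G t (ψ t)) (j : ℕ) :
    trajectory G j (ψ 0) = ψ j := by
  induction j with
  | zero => rfl
  | succ j ih => simp only [trajectory, comp_apply, ih, Nat.cast_succ, hψ]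

theorem periodicTrajectory_natCast {x : α} {j : ℕ} (hj : j < p) :
    periodicTrajectory G p x j = trajectory G j x := by
  rw [periodicTrajectory, Int.emod_eq_of_lt (Int.natCast_nonneg j) (by exact_mod_cast hj),
    Int.toNat_natCast]

theorem periodicTrajectory_zero (x : α) : periodicTrajectory G p x 0 = x := by
  simp [periodicTrajectory, trajectory]

theorem periodic_periodicTrajectory (x : α) : Periodic (periodicTrajectory G p x) p := by
  intro t
  simp only [periodicTrajectory, Int.add_emod_right]

theorem periodicTrajectory_add_one (hG : Periodic G p) (hp : 0 < p) {x : α}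
    (hx : trajectory G p x = x) (t : ℤ) :
    periodicTrajectory G p x (t + 1) = G t (periodicTrajectory G p x t) := by
  have hper := periodic_periodicTrajectory (G := G) (p := p) x
  revert t
  refine Periodic.forall_of_forall_lt (fun t => ?_) hp fun j hj => ?_
  · rw [add_right_comm, hper, hper, hG]
  · rw [periodicTrajectory_natCast hj]
    rcases Nat.lt_or_ge (j + 1) p with hj' | hj'
    · rw [← Nat.cast_succ, periodicTrajectory_natCast hj']
      rfl
    · obtain rfl : j + 1 = p := by omega
      rw [← Nat.cast_succ, hper.eq, periodicTrajectory_zero]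
      exact hx.symm

theorem eq_periodicTrajectory (hp : 0 < p) {ψ : ℤ → α} (hψ : ∀ t, ψ (t + 1) = G t (ψ t))
    (hψp : Periodic ψ p) : ψ = periodicTrajectory G p (ψ 0) := by
  funext t
  revert t
  refine Periodic.forall_of_forall_lt (fun t => ?_) hp fun j hj => ?_
  · simp only [hψp t, periodic_periodicTrajectory _ t]
  · rw [periodicTrajectory_natCast hj, trajectory_eq_of_solution hψ]

end Trajectories

theorem hasFDerivAt_trajectory {X : Type*} [NormedAddCommGroup X] [NormedSpace ℂ X]
    {G : ℤ → X → X} {x : X} {m : ℕ}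
    (hG : ∀ j < m, DifferentiableAt ℂ (G j) (trajectory G j x)) :
    HasFDerivAt (trajectory G m)
      (prodOp (fun t => fderiv ℂ (G t) (trajectory G t.toNat x)) m) x := by
  induction m with
  | zero => exact hasFDerivAt_id x
  | succ m ih =>
    simpa [prodOp, trajectory] using
      (hG m m.lt_succ_self).hasFDerivAt.comp x (ih fun j hj => hG j (by omega))

/-- Discrete Gronwall estimate: a trajectory starting near `ψ 0` stays in the tube of radius `r`
around a sequence `ψ` that solves the equation up to a defect `Γ`. -/
theorem norm_trajectory_sub_le {E : Type*} [SeminormedAddCommGroup E] {G : ℤ → E → E}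
    {ψ : ℤ → E} {m : ℕ} {L Γ r : ℝ} (hL : 0 ≤ L) (hΓ : 0 ≤ Γ)
    (hLip : ∀ j < m, ∀ u ∈ closedBall (ψ j) r, ‖G j u - G j (ψ j)‖ ≤ L * ‖u - ψ j‖)
    (hdefect : ∀ j < m, ‖G j (ψ j) - ψ (j + 1)‖ ≤ Γ) {x : E}
    (hx : (L + 1) ^ m * (‖x - ψ 0‖ + Γ) ≤ r) {j : ℕ} (hj : j ≤ m) :
    ‖trajectory G j x - ψ j‖ ≤ (L + 1) ^ j * (‖x - ψ 0‖ + Γ) := by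
  induction j with
  | zero => simpa [trajectory] using hΓ
  | succ j ih =>
    have ih := ih (by omega)
    have hs : 0 ≤ ‖x - ψ 0‖ + Γ := by positivity
    have hpow : (L + 1) ^ j ≤ (L + 1) ^ m := pow_le_pow_right₀ (by linarith) (by omega)
    have hmem : trajectory G j x ∈ closedBall (ψ j) r := by
      rw [mem_closedBall_iff_norm]
      nlinarith
    have hone : 1 ≤ (L + 1) ^ j := one_le_pow₀ (by linarith)
    calc ‖trajectory G (j + 1) x - ψ (j + 1 : ℕ)‖
        = ‖(G j (trajectory G j x) - G j (ψ j)) + (G j (ψ j) - ψ (j + 1))‖ := by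
          rw [sub_add_sub_cancel]; push_cast; rfl
      _ ≤ L * ((L + 1) ^ j * (‖x - ψ 0‖ + Γ)) + Γ :=
          (norm_add_le _ _).trans (add_le_add ((hLip j (by omega) _ hmem).trans
            (mul_le_mul_of_nonneg_left ih hL)) (hdefect j (by omega)))
      _ ≤ (L + 1) ^ (j + 1) * (‖x - ψ 0‖ + Γ) := by
          rw [pow_succ]
          nlinarith [mul_le_mul_of_nonneg_right hone hs, norm_nonneg (x - ψ 0)]

section Newton

variable {𝕜 E : Type*} [RCLike 𝕜] [NormedAddCommGroup E] [NormedSpace ℝ E] [NormedSpace 𝕜 E]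
  {P : E → E} {P' : E → E →L[𝕜] E} {Ξ : E →L[𝕜] E}

/-- With `T = 1 - Ξ` invertible, `x ↦ x - T⁻¹ (x - P x)` has the same fixed points as `P`, and its
derivative `T⁻¹ (P' x - Ξ)` is small wherever `P'` is close to `Ξ`. -/
theorem lipschitzOnWith_newton (T : (E →L[𝕜] E)ˣ) (hT : (T : E →L[𝕜] E) = 1 - Ξ) {s : Set E}
    (hs : Convex ℝ s) (hP : ∀ x ∈ s, HasFDerivAt P (P' x) x)
    (hP' : ∀ x ∈ s, ‖(↑T⁻¹ * (P' x - Ξ) : E →L[𝕜] E)‖ ≤ 1 / 2) :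
    LipschitzOnWith (1 / 2) (fun x => x - (↑T⁻¹ : E →L[𝕜] E) (x - P x)) s := by
  refine hs.lipschitzOnWith_of_nnnorm_hasFDerivWithin_le
    (f' := fun x => (↑T⁻¹ : E →L[𝕜] E) * (P' x - Ξ)) (fun x hx => ?_) fun x hx => ?_
  · have hinv : (↑T⁻¹ : E →L[𝕜] E) * (1 - Ξ) = 1 := by rw [← hT]; exact T.inv_mul
    have hD : (↑T⁻¹ : E →L[𝕜] E) * (P' x - Ξ) = 1 - ↑T⁻¹ * (1 - P' x) := by
      rw [show P' x - Ξ = (1 - Ξ) - (1 - P' x) by abel, mul_sub, hinv]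
    rw [hD]
    exact ((hasFDerivAt_id x).sub ((↑T⁻¹ : E →L[𝕜] E).hasFDerivAt.comp x
      ((hasFDerivAt_id x).sub (hP x hx)))).hasFDerivWithinAt
  · rw [← NNReal.coe_le_coe]
    exact hP' x hx

theorem exists_unique_fixedPoint_of_hasFDerivAt [CompleteSpace E] (T : (E →L[𝕜] E)ˣ)
    (hT : (T : E →L[𝕜] E) = 1 - Ξ) {x₀ : E} {ρ : ℝ}
    (hP : ∀ x ∈ closedBall x₀ ρ, HasFDerivAt P (P' x) x)
    (hP' : ∀ x ∈ closedBall x₀ ρ, ‖(↑T⁻¹ * (P' x - Ξ) : E →L[𝕜] E)‖ ≤ 1 / 2)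
    (hx₀ : 2 * ‖(↑T⁻¹ : E →L[𝕜] E)‖ * ‖P x₀ - x₀‖ ≤ ρ) :
    ∃ x ∈ closedBall x₀ ρ, P x = x ∧ ‖x - x₀‖ ≤ 2 * ‖(↑T⁻¹ : E →L[𝕜] E)‖ * ‖P x₀ - x₀‖ ∧
      ∀ y ∈ closedBall x₀ ρ, P y = y → y = x := by
  have hN := lipschitzOnWith_newton T hT (convex_closedBall x₀ ρ) hP hP'
  set N : E → E := fun x => x - (↑T⁻¹ : E →L[𝕜] E) (x - P x) with hNdef
  have hNsub : ∀ x ∈ closedBall x₀ ρ, ∀ y ∈ closedBall x₀ ρ, ‖N x - N y‖ ≤ 1 / 2 * ‖x - y‖ :=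
    fun x hx y hy => by simpa using lipschitzOnWith_iff_norm_sub_le.mp hN hx hy
  have hinj : ∀ v, (↑T⁻¹ : E →L[𝕜] E) v = 0 → v = 0 := fun v hv => by
    calc v = ((T : E →L[𝕜] E) * ↑T⁻¹) v := by rw [T.mul_inv]; rfl
      _ = (T : E →L[𝕜] E) 0 := congrArg _ hv
      _ = 0 := map_zero _
  have hfix : ∀ x, N x = x ↔ P x = x := fun x => by
    simp only [hNdef, sub_eq_self]
    exact ⟨fun h => (sub_eq_zero.1 (hinj _ h)).symm, fun h => by rw [h, sub_self, map_zero]⟩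
  have hNx₀ : ‖N x₀ - x₀‖ ≤ ‖(↑T⁻¹ : E →L[𝕜] E)‖ * ‖P x₀ - x₀‖ := by
    rw [hNdef, sub_sub_cancel_left, ← map_neg, neg_sub]
    exact ContinuousLinearMap.le_opNorm _ _
  have hx₀mem : x₀ ∈ closedBall x₀ ρ :=
    mem_closedBall_self (le_trans (by positivity) hx₀)
  have hmaps : Set.MapsTo N (closedBall x₀ ρ) (closedBall x₀ ρ) := fun x hx => by
    rw [mem_closedBall_iff_norm] at hx ⊢
    calc ‖N x - x₀‖ ≤ ‖N x - N x₀‖ + ‖N x₀ - x₀‖ := norm_sub_le_norm_sub_add_norm_sub _ _ _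
      _ ≤ ρ := by linarith [hNsub x (mem_closedBall_iff_norm.2 hx) x₀ hx₀mem]
  have hcontr : ContractingWith (1 / 2) (hmaps.restrict N _ _) :=
    ⟨by rw [← NNReal.coe_lt_coe]; norm_num, hN.mapsToRestrict hmaps⟩
  obtain ⟨x, hx, hNx, -⟩ := hcontr.exists_fixedPoint' isClosed_closedBall.isComplete hmaps
    hx₀mem (edist_ne_top _ _)
  refine ⟨x, hx, (hfix x).1 hNx, ?_, fun y hy hPy => ?_⟩
  · have h := hNsub x hx x₀ hx₀mem
    rw [hNx] at h
    linarith [norm_sub_le_norm_sub_add_norm_sub x (N x₀) x₀]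
  · have h := hNsub y hy x hx
    rw [(hfix y).2 hPy, hNx] at h
    exact sub_eq_zero.1 (norm_le_zero_iff.1 (by linarith [norm_nonneg (y - x)]))

end Newton

theorem isUnit_one_sub_of_norm_inv_mul_sub_lt_one {R : Type*} [NormedRing R]
    [HasSummableGeomSeries R] {Ξ D : R} (T : Rˣ) (hT : (T : R) = 1 - Ξ)
    (h : ‖(↑T⁻¹ * (D - Ξ) : R)‖ < 1) : IsUnit (1 - D) := by
  have hfac : 1 - D = T * (1 - ↑T⁻¹ * (D - Ξ)) := by
    rw [mul_sub, mul_one, ← mul_assoc, T.mul_inv, one_mul, hT]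
    abel
  exact hfac ▸ ⟨T * Units.oneSub _ h, rfl⟩

theorem eventually_closedBall_subset_and_eventually_norm_sub_le {E F : Type*}
    [SeminormedAddCommGroup E] [SeminormedAddCommGroup F] {f : ℕ → E → F} {s : Set E} {a : E}
    {b : F} (hs : s ∈ 𝓝 a)
    (hequi : ∀ ε > 0, ∃ δ > 0, ∀ n, 1 ≤ n → ∀ v ∈ s, ‖v - a‖ < δ → ‖f n v - f n a‖ ≤ ε)
    (hconv : Tendsto (fun n => ‖f n a - b‖) atTop (𝓝 0)) {ε : ℝ} (hε : 0 < ε) :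
    ∀ᶠ r in 𝓝 (0 : ℝ), closedBall a r ⊆ s ∧
      ∀ᶠ n in atTop, ∀ v ∈ closedBall a r, ‖f n v - b‖ ≤ ε := by
  obtain ⟨δ, hδ, hequi⟩ := hequi (ε / 2) (half_pos hε)
  filter_upwards [eventually_closedBall_subset hs, eventually_lt_nhds hδ] with r hrs hrδ
  refine ⟨hrs, ?_⟩
  filter_upwards [hconv.eventually (eventually_le_nhds (half_pos hε)), eventually_ge_atTop 1]
    with n hconvn hn v hv
  have hv' : ‖v - a‖ < δ := (mem_closedBall_iff_norm.1 hv).trans_lt hrδ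
  calc ‖f n v - b‖ ≤ ‖f n v - f n a‖ + ‖f n a - b‖ := norm_sub_le_norm_sub_add_norm_sub _ _ _
    _ ≤ ε / 2 + ε / 2 := add_le_add (hequi n hn v (hrs hv) hv') hconvn
    _ = ε := add_halves ε

/-- A family that is equicontinuous and converges at finitely many points converges uniformly
on small closed balls around them. -/
theorem exists_pos_closedBall_subset_and_eventually_norm_sub_le {ι E F : Type*}
    [SeminormedAddCommGroup E] [SeminormedAddCommGroup F] {I : Set ι} (hI : I.Finite)
    {f : ℕ → ι → E → F} {s : ι → Set E} {a : ι → E} {b : ι → F} (hs : ∀ i ∈ I, s i ∈ 𝓝 (a i))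
    (hequi : ∀ i ∈ I, ∀ ε > 0, ∃ δ > 0, ∀ n, 1 ≤ n → ∀ v ∈ s i, ‖v - a i‖ < δ →
      ‖f n i v - f n i (a i)‖ ≤ ε)
    (hconv : ∀ i ∈ I, Tendsto (fun n => ‖f n i (a i) - b i‖) atTop (𝓝 0)) {ε : ℝ}
    (hε : 0 < ε) :
    ∃ r > 0, (∀ i ∈ I, closedBall (a i) r ⊆ s i) ∧
      ∀ᶠ n in atTop, ∀ i ∈ I, ∀ v ∈ closedBall (a i) r, ‖f n i v - b i‖ ≤ ε := by
  have h := (eventually_all_finite hI).2 fun i hi =>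
    eventually_closedBall_subset_and_eventually_norm_sub_le (hs i hi) (hequi i hi) (hconv i hi) hε
  obtain ⟨r, hr, hr0⟩ := ((h.filter_mono nhdsWithin_le_nhds).and
    (self_mem_nhdsWithin : Set.Ioi (0 : ℝ) ∈ 𝓝[>] 0)).exists
  exact ⟨r, hr0, fun i hi => (hr i hi).1, (eventually_all_finite hI).2 fun i hi => (hr i hi).2⟩

section PeriodicSolutions

variable {X : Type*} [NormedAddCommGroup X] [NormedSpace ℂ X]
  {G : ℤ → X → X} {ψ : ℤ → X} {A : ℤ → X →L[ℂ] X} {θ : ℕ} {r L ε Γ ρ K : ℝ}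

theorem trajectory_near_of_mem_closedBall (hL : 1 ≤ L) (hε : 0 ≤ ε) (hΓ : 0 ≤ Γ)
    (hdiff : ∀ j < θ, ∀ v ∈ closedBall (ψ j) r, DifferentiableAt ℂ (G j) v)
    (hclose : ∀ j < θ, ∀ v ∈ closedBall (ψ j) r, ‖fderiv ℂ (G j) v - A j‖ ≤ ε)
    (hA : ∀ j < θ, ‖A j‖ + ε ≤ L) (hdefect : ∀ j < θ, ‖G j (ψ j) - ψ (j + 1)‖ ≤ Γ)
    (hρ : 2 * (L + 1) ^ θ * ρ ≤ r) (hΓρ : Γ ≤ ρ) {x : X} (hx : x ∈ closedBall (ψ 0) ρ) :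
    (∀ j ≤ θ, ‖trajectory G j x - ψ j‖ ≤ (L + 1) ^ j * (‖x - ψ 0‖ + Γ)) ∧
      HasFDerivAt (trajectory G θ)
        (prodOp (fun t => fderiv ℂ (G t) (trajectory G t.toNat x)) θ) x ∧
      ‖prodOp (fun t => fderiv ℂ (G t) (trajectory G t.toNat x)) θ - prodOp A θ‖ ≤
        θ * L ^ θ * ε := by
  have hbound : ∀ j < θ, ∀ v ∈ closedBall (ψ j) r, ‖fderiv ℂ (G j) v‖ ≤ L := fun j hj v hv =>
    (norm_le_norm_sub_add _ (A j)).trans (by linarith [hclose j hj v hv, hA j hj])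
  have hLip : ∀ j < θ, ∀ u ∈ closedBall (ψ j) r, ‖G j u - G j (ψ j)‖ ≤ L * ‖u - ψ j‖ :=
    fun j hj u hu => (convex_closedBall _ _).norm_image_sub_le_of_norm_fderiv_le (hdiff j hj)
      (hbound j hj) (mem_closedBall_self ((norm_nonneg _).trans (mem_closedBall_iff_norm.1 hu))) hu
  have hM : 0 ≤ (L + 1) ^ θ := by positivity
  have hxΓ : ‖x - ψ 0‖ + Γ ≤ 2 * ρ := by linarith [mem_closedBall_iff_norm.1 hx]
  have htube : ∀ j ≤ θ, ‖trajectory G j x - ψ j‖ ≤ (L + 1) ^ j * (‖x - ψ 0‖ + Γ) :=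
    fun j hj => norm_trajectory_sub_le (by linarith) hΓ hLip hdefect
      ((mul_le_mul_of_nonneg_left hxΓ hM).trans (by linarith)) hj
  have hmem : ∀ j < θ, trajectory G j x ∈ closedBall (ψ j) r := fun j hj => by
    have hpow : (L + 1) ^ j ≤ (L + 1) ^ θ := pow_le_pow_right₀ (by linarith) hj.le
    rw [mem_closedBall_iff_norm]
    nlinarith [htube j hj.le, norm_nonneg (x - ψ 0)]
  refine ⟨htube, hasFDerivAt_trajectory fun j hj => hdiff j hj _ (hmem j hj),
    norm_prodOp_sub_prodOp_le hL (fun j hj => ?_) (fun j hj => by linarith [hA j hj])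
      (fun j hj => ?_)⟩
  · simpa using hbound j hj _ (hmem j hj)
  · simpa using hclose j hj _ (hmem j hj)

theorem exists_unique_fixedPoint_trajectory [CompleteSpace X] (T : (X →L[ℂ] X)ˣ)
    (hT : (T : X →L[ℂ] X) = 1 - prodOp A θ) (hψθ : ψ θ = ψ 0) (hL : 1 ≤ L) (hε : 0 ≤ ε)
    (hΓ : 0 ≤ Γ) (hdiff : ∀ j < θ, ∀ v ∈ closedBall (ψ j) r, DifferentiableAt ℂ (G j) v)
    (hclose : ∀ j < θ, ∀ v ∈ closedBall (ψ j) r, ‖fderiv ℂ (G j) v - A j‖ ≤ ε)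
    (hA : ∀ j < θ, ‖A j‖ + ε ≤ L) (hsmall : ‖(↑T⁻¹ : X →L[ℂ] X)‖ * (θ * L ^ θ * ε) ≤ 1 / 2)
    (hdefect : ∀ j < θ, ‖G j (ψ j) - ψ (j + 1)‖ ≤ Γ) (hρ : 2 * (L + 1) ^ θ * ρ ≤ r)
    (hK : (L + 1) ^ θ * (2 * ‖(↑T⁻¹ : X →L[ℂ] X)‖ * (L + 1) ^ θ + 1) ≤ K) (hKΓ : K * Γ ≤ ρ) :
    ∃ x, trajectory G θ x = x ∧ (∀ j ≤ θ, ‖trajectory G j x - ψ j‖ ≤ K * Γ) ∧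
      (∀ y ∈ closedBall (ψ 0) ρ, trajectory G θ y = y → y = x) ∧
      IsUnit (1 - prodOp (fun t => fderiv ℂ (G t) (trajectory G t.toNat x)) θ) := by
  set M := (L + 1) ^ θ
  set κ := ‖(↑T⁻¹ : X →L[ℂ] X)‖
  have hM : 1 ≤ M := one_le_pow₀ (by linarith)
  have hκM : 0 ≤ 2 * κ * M := by positivity
  have hκMK : 2 * κ * M ≤ K := by nlinarith [mul_le_mul_of_nonneg_right hM hκM]
  have hΓρ : Γ ≤ ρ := le_trans (le_mul_of_one_le_left hΓ (by nlinarith)) hKΓ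
  have hnear := fun x (hx : x ∈ closedBall (ψ 0) ρ) =>
    trajectory_near_of_mem_closedBall hL hε hΓ hdiff hclose hA hdefect hρ hΓρ hx
  have hP' : ∀ x ∈ closedBall (ψ 0) ρ, ‖(↑T⁻¹ : X →L[ℂ] X) *
      (prodOp (fun t => fderiv ℂ (G t) (trajectory G t.toNat x)) θ - prodOp A θ)‖ ≤ 1 / 2 :=
    fun x hx => (norm_mul_le _ _).trans
      ((mul_le_mul_of_nonneg_left (hnear x hx).2.2 (norm_nonneg _)).trans hsmall)
  have hψ0 : ψ 0 ∈ closedBall (ψ 0) ρ := mem_closedBall_self (hΓ.trans hΓρ)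
  have hP₀ : ‖trajectory G θ (ψ 0) - ψ 0‖ ≤ M * Γ := by
    simpa [hψθ] using (hnear (ψ 0) hψ0).1 θ le_rfl
  have hκP₀ : 2 * κ * ‖trajectory G θ (ψ 0) - ψ 0‖ ≤ ρ := calc
    _ ≤ 2 * κ * M * Γ := by rw [mul_assoc _ M]; gcongr
    _ ≤ ρ := (mul_le_mul_of_nonneg_right hκMK hΓ).trans hKΓ
  obtain ⟨x, hx, hfix, hxψ, huniq⟩ := exists_unique_fixedPoint_of_hasFDerivAt T hT
    (fun x hx => (hnear x hx).2.1) hP' hκP₀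
  refine ⟨x, hfix, fun j hj => ?_, huniq,
    isUnit_one_sub_of_norm_inv_mul_sub_lt_one T hT ((hP' x hx).trans_lt (by norm_num))⟩
  calc ‖trajectory G j x - ψ j‖ ≤ (L + 1) ^ j * (‖x - ψ 0‖ + Γ) := (hnear x hx).1 j hj
    _ ≤ M * (2 * κ * (M * Γ) + Γ) := by
        gcongr
        · exact pow_le_pow_right₀ (by linarith) hj
        · exact hxψ.trans (by gcongr)
    _ ≤ K * Γ := by nlinarith

theorem exists_unique_periodicSolution_near [CompleteSpace X] {U : ℤ → Set X} (hθ : 0 < θ)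
    (hG : Periodic G θ) (hU : Periodic U θ) (hψ : Periodic ψ θ) (T : (X →L[ℂ] X)ˣ)
    (hT : (T : X →L[ℂ] X) = 1 - prodOp A θ) (hL : 1 ≤ L) (hε : 0 ≤ ε) (hΓ : 0 ≤ Γ)
    (hUr : ∀ j < θ, closedBall (ψ j) r ⊆ U j)
    (hdiff : ∀ j < θ, ∀ v ∈ closedBall (ψ j) r, DifferentiableAt ℂ (G j) v)
    (hclose : ∀ j < θ, ∀ v ∈ closedBall (ψ j) r, ‖fderiv ℂ (G j) v - A j‖ ≤ ε)
    (hA : ∀ j < θ, ‖A j‖ + ε ≤ L) (hsmall : ‖(↑T⁻¹ : X →L[ℂ] X)‖ * (θ * L ^ θ * ε) ≤ 1 / 2)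
    (hdefect : ∀ j < θ, ‖G j (ψ j) - ψ (j + 1)‖ ≤ Γ) (hρ : 2 * (L + 1) ^ θ * ρ ≤ r)
    (hK : (L + 1) ^ θ * (2 * ‖(↑T⁻¹ : X →L[ℂ] X)‖ * (L + 1) ^ θ + 1) ≤ K) (hKΓ : K * Γ ≤ ρ) :
    ∃ φ : ℤ → X, (∀ t, φ t ∈ U t) ∧ (∀ t, φ (t + 1) = G t (φ t)) ∧ Periodic φ θ ∧
      (∀ t, ‖φ t - ψ t‖ ≤ ρ) ∧
      (∀ φ' : ℤ → X, (∀ t, φ' (t + 1) = G t (φ' t)) → Periodic φ' θ →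
        (∀ t, ‖φ' t - ψ t‖ ≤ ρ) → φ' = φ) ∧
      (∀ t, ‖φ t - ψ t‖ ≤ K * Γ) ∧
      (1 : ℂ) ∉ spectrum ℂ (prodOp (fun t => fderiv ℂ (G t) (φ t)) θ) := by
  obtain ⟨x, hfix, hnear, huniq, hunit⟩ := exists_unique_fixedPoint_trajectory T hT hψ.eq hL hε
    hΓ hdiff hclose hA hsmall hdefect hρ hK hKΓ
  have hφ : Periodic (periodicTrajectory G θ x) θ := periodic_periodicTrajectory x
  have hnear' : ∀ t, ‖periodicTrajectory G θ x t - ψ t‖ ≤ K * Γ :=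
    Periodic.forall_of_forall_lt (fun t => by simp only [hφ t, hψ t]) hθ fun j hj => by
      simpa [periodicTrajectory_natCast hj] using hnear j hj.le
  have hM : 1 ≤ (L + 1) ^ θ := one_le_pow₀ (by linarith)
  have hκM := mul_nonneg (norm_nonneg (↑T⁻¹ : X →L[ℂ] X)) (sq_nonneg ((L + 1) ^ θ))
  have hK1 : 1 ≤ K := le_trans (by nlinarith) hK
  have hρ0 : 0 ≤ ρ := (mul_nonneg (zero_le_one.trans hK1) hΓ).trans hKΓ
  have hKΓr : K * Γ ≤ r := by nlinarith
  refine ⟨periodicTrajectory G θ x, ?_, periodicTrajectory_add_one hG hθ hfix, hφ,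
    fun t => (hnear' t).trans hKΓ, fun φ' hsol hper hclose => ?_, hnear', ?_⟩
  · exact Periodic.forall_of_forall_lt (fun t => by simp only [hφ t, hU t]) hθ fun j hj =>
      hUr j hj (mem_closedBall_iff_norm.2 ((hnear' j).trans hKΓr))
  · rw [eq_periodicTrajectory hθ hsol hper]
    refine congrArg _ (huniq _ (mem_closedBall_iff_norm.2 (by simpa using hclose 0)) ?_)
    rw [trajectory_eq_of_solution hsol, hper.eq]
  · have hprod : prodOp (fun t => fderiv ℂ (G t) (periodicTrajectory G θ x t)) θ =
        prodOp (fun t => fderiv ℂ (G t) (trajectory G t.toNat x)) θ :=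
      prodOp_congr fun j hj => by simp only [periodicTrajectory_natCast hj, Int.toNat_natCast]
    rwa [spectrum.notMem_iff, map_one, hprod]

theorem exists_bound_and_tolerance {E : Type*} [SeminormedAddCommGroup E] (A : ℕ → E) (θ : ℕ)
    {κ : ℝ} (hκ : 0 ≤ κ) :
    ∃ L ≥ 1, ∃ ε > 0, (∀ j < θ, ‖A j‖ + ε ≤ L) ∧ κ * (θ * L ^ θ * ε) ≤ 1 / 2 := by
  set L := 2 + ∑ j ∈ Finset.range θ, ‖A j‖
  have hAL : ∀ j < θ, ‖A j‖ + 1 ≤ L := fun j hj => by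
    linarith [Finset.single_le_sum (fun _ _ => norm_nonneg _) (Finset.mem_range.2 hj)
      (f := (‖A ·‖))]
  have hL : 1 ≤ L := by
    linarith [Finset.sum_nonneg fun j (_ : j ∈ Finset.range θ) => norm_nonneg (A j)]
  have hc : 0 ≤ κ * (θ * L ^ θ) := by positivity
  refine ⟨L, hL, 1 / (2 * (κ * (θ * L ^ θ) + 1)), by positivity, fun j hj => ?_, ?_⟩
  · have : 1 / (2 * (κ * (θ * L ^ θ) + 1)) ≤ 1 := by
      rw [div_le_one (by positivity)]
      linarith
    linarith [hAL j hj]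
  · rw [← mul_assoc, mul_one_div, div_le_iff₀ (by positivity)]
    linarith

theorem eventually_exists_unique_periodicSolution [CompleteSpace X] {G : ℕ → ℤ → X → X}
    {U : ℤ → Set X} {Γ : ℕ → ℝ} (hθ : 0 < θ) (hG : ∀ n, Periodic (G n) θ) (hU : Periodic U θ)
    (hψ : Periodic ψ θ) (hUopen : ∀ t, IsOpen (U t))
    (hdiff : ∀ n t, DifferentiableOn ℂ (G n t) (U t))
    (hDnear : ∀ ε > 0, ∃ r > 0, (∀ j < θ, closedBall (ψ j) r ⊆ U j) ∧
      ∀ᶠ n in atTop, ∀ j < θ, ∀ v ∈ closedBall (ψ j) r, ‖fderiv ℂ (G n j) v - A j‖ ≤ ε)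
    (hA : (1 : ℂ) ∉ spectrum ℂ (prodOp A θ)) (hΓ : ∀ n, 0 ≤ Γ n)
    (hΓlim : Tendsto Γ atTop (𝓝 0))
    (hdefect : ∀ᶠ n in atTop, ∀ j < θ, ‖G n j (ψ j) - ψ (j + 1)‖ ≤ Γ n) :
    ∃ ρ > 0, ∃ K ≥ 0, ∀ᶠ n in atTop, ∃ φ : ℤ → X, (∀ t, φ t ∈ U t) ∧
      (∀ t, φ (t + 1) = G n t (φ t)) ∧ Periodic φ θ ∧ (∀ t, ‖φ t - ψ t‖ ≤ ρ) ∧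
      (∀ φ' : ℤ → X, (∀ t, φ' (t + 1) = G n t (φ' t)) → Periodic φ' θ →
        (∀ t, ‖φ' t - ψ t‖ ≤ ρ) → φ' = φ) ∧
      (∀ t, ‖φ t - ψ t‖ ≤ K * Γ n) ∧
      (1 : ℂ) ∉ spectrum ℂ (prodOp (fun t => fderiv ℂ (G n t) (φ t)) θ) := by
  rw [spectrum.notMem_iff, map_one] at hA
  obtain ⟨T, hT⟩ := hA
  obtain ⟨L, hL, ε, hε, hAL, hsmall⟩ :=
    exists_bound_and_tolerance (fun j : ℕ => A j) θ (norm_nonneg (↑T⁻¹ : X →L[ℂ] X))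
  obtain ⟨r, hr, hUr, hnear⟩ := hDnear ε hε
  set M := (L + 1) ^ θ
  set K := M * (2 * ‖(↑T⁻¹ : X →L[ℂ] X)‖ * M + 1)
  have hM : 0 < M := pow_pos (by linarith) θ
  have hK : 0 < K := by positivity
  have hρ : 0 < r / (2 * M) := by positivity
  refine ⟨r / (2 * M), hρ, K, hK.le, ?_⟩
  filter_upwards [hnear, hdefect, hΓlim.eventually (eventually_le_nhds (div_pos hρ hK))]
    with n hclose hdef hΓn
  exact exists_unique_periodicSolution_near hθ (hG n) hU hψ T hT hL hε.le (hΓ n) hUr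
    (fun j hj v hv => (hdiff n j).differentiableAt ((hUopen j).mem_nhds (hUr j hj hv))) hclose
    hAL hsmall hdef (mul_div_cancel₀ r (by positivity)).le le_rfl
    ((le_div_iff₀' hK).1 hΓn)

end PeriodicSolutions

theorem perturbed_periodic_solutions_general
    {X : Type*} [NormedAddCommGroup X] [NormedSpace ℂ X] [CompleteSpace X]
    (θ₀ θ₁ θ : ℕ) (hθ₀ : 0 < θ₀) (hθ₁ : 0 < θ₁) (hθ : θ = Nat.lcm θ₀ θ₁)
    (U : ℤ → Set X) (hUopen : ∀ t, IsOpen (U t)) (hUper : ∀ t : ℤ, U (t + θ₀) = U t)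
    (F : ℕ → ℤ → X → X) (hFper : ∀ (n : ℕ) (t : ℤ), F n (t + θ₀) = F n t)
    -- (i) every F_t^n is continuously differentiable on U_t
    (hC1 : ∀ (n : ℕ) (t : ℤ), ContDiffOn ℂ 1 (F n t) (U t))
    -- (ii) the family {DF_t^n}_{n∈ℕ} is equicontinuous
    (hequi : ∀ t : ℤ, 0 ≤ t → t < θ₀ → ∀ u ∈ U t, ∀ ε : ℝ, 0 < ε →
      ∃ δ : ℝ, 0 < δ ∧ ∀ n : ℕ, 1 ≤ n → ∀ v ∈ U t, ‖v - u‖ < δ →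
        ‖fderiv ℂ (F n t) v - fderiv ℂ (F n t) u‖ ≤ ε)
    -- φ⁰ is a θ₁-periodic solution of the unperturbed equation
    (φ0 : ℤ → X) (hmem : ∀ t : ℤ, φ0 t ∈ U t)
    (hsol : ∀ t : ℤ, φ0 (t + 1) = F 0 t (φ0 t))
    (hper : ∀ t : ℤ, φ0 (t + θ₁) = φ0 t)
    -- weak hyperbolicity: 1 ∉ σ(Ξ_θ^0)
    (hweak : (1 : ℂ) ∉ spectrum ℂ (prodOp (fun t => fderiv ℂ (F 0 t) (φ0 t)) θ))
    -- consistency assumptions (2.7) and (2.8)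
    (Γ₀ : ℝ → ℝ) (hΓ₀nn : ∀ ϱ : ℝ, 0 ≤ Γ₀ ϱ)
    (hΓ₀lim : Tendsto Γ₀ (nhdsWithin 0 (Set.Ioi 0)) (nhds 0))
    (hFconv : ∀ t : ℤ, 0 ≤ t → t < θ → ∀ n : ℕ, 1 ≤ n →
      ‖F n t (φ0 t) - F 0 t (φ0 t)‖ ≤ Γ₀ (1 / (n : ℝ)))
    (hDconv : ∀ t : ℤ, 0 ≤ t → t < θ →
      Tendsto (fun n : ℕ => ‖fderiv ℂ (F n t) (φ0 t) - fderiv ℂ (F 0 t) (φ0 t)‖)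
        atTop (nhds 0)) :
    ∃ ρ₀ : ℝ, 0 < ρ₀ ∧ ∃ K₀ : ℝ, 0 ≤ K₀ ∧ ∃ N₀ : ℕ, 1 ≤ N₀ ∧
      ∀ n : ℕ, N₀ ≤ n → ∃ φn : ℤ → X,
        -- φⁿ is a θ-periodic solution of the n-th equation in B_{ρ₀}(φ⁰)
        (∀ t : ℤ, φn t ∈ U t) ∧
        (∀ t : ℤ, φn (t + 1) = F n t (φn t)) ∧
        (∀ t : ℤ, φn (t + θ) = φn t) ∧
        (∀ t : ℤ, ‖φn t - φ0 t‖ ≤ ρ₀) ∧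
        -- uniqueness among θ-periodic solutions in B_{ρ₀}(φ⁰)
        (∀ ψ : ℤ → X, (∀ t : ℤ, ψ t ∈ U t) → (∀ t : ℤ, ψ (t + 1) = F n t (ψ t)) →
          (∀ t : ℤ, ψ (t + θ) = ψ t) → (∀ t : ℤ, ‖ψ t - φ0 t‖ ≤ ρ₀) → ψ = φn) ∧
        -- convergence estimate (2.9)
        (∀ t : ℤ, ‖φn t - φ0 t‖ ≤ K₀ * Γ₀ (1 / (n : ℝ))) ∧
        -- φⁿ is weakly hyperbolic
        (1 : ℂ) ∉ spectrum ℂ (prodOp (fun t => fderiv ℂ (F n t) (φn t)) θ) := by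
  have hθpos : 0 < θ := hθ ▸ Nat.lcm_pos hθ₀ hθ₁
  have hθ₀θ : θ₀ ∣ θ := hθ ▸ Nat.dvd_lcm_left θ₀ θ₁
  have hequi' : ∀ t : ℤ, ∀ u ∈ U t, ∀ ε : ℝ, 0 < ε → ∃ δ : ℝ, 0 < δ ∧ ∀ n : ℕ, 1 ≤ n →
      ∀ v ∈ U t, ‖v - u‖ < δ → ‖fderiv ℂ (F n t) v - fderiv ℂ (F n t) u‖ ≤ ε :=
    Periodic.forall_of_forall_lt (fun t => by simp only [hUper, hFper]) hθ₀ fun j hj =>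
      hequi j (Int.natCast_nonneg j) (by exact_mod_cast hj)
  have hDnear : ∀ ε > 0, ∃ r > 0, (∀ j < θ, closedBall (φ0 j) r ⊆ U j) ∧
      ∀ᶠ n in atTop, ∀ j < θ, ∀ v ∈ closedBall (φ0 j) r,
        ‖fderiv ℂ (F n j) v - fderiv ℂ (F 0 j) (φ0 j)‖ ≤ ε := fun ε hε =>
    exists_pos_closedBall_subset_and_eventually_norm_sub_le (Set.finite_Iio θ)
      (fun j _ => (hUopen _).mem_nhds (hmem _)) (fun j _ => hequi' j _ (hmem j))
      (fun j hj => hDconv j (Int.natCast_nonneg _) (by exact_mod_cast hj)) hε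
  have hΓlim : Tendsto (fun n : ℕ => Γ₀ (1 / n)) atTop (𝓝 0) :=
    (hΓ₀lim.comp (tendsto_inv_atTop_nhdsGT_zero.comp tendsto_natCast_atTop_atTop)).congr
      fun n => by simp
  have hdefect : ∀ᶠ n : ℕ in atTop, ∀ j < θ, ‖F n j (φ0 j) - φ0 (j + 1)‖ ≤ Γ₀ (1 / n) :=
    (eventually_ge_atTop 1).mono fun n hn j hj => by
      rw [hsol]
      exact hFconv j (Int.natCast_nonneg j) (by exact_mod_cast hj) n hn
  obtain ⟨ρ₀, hρ₀, K₀, hK₀, hev⟩ := eventually_exists_unique_periodicSolution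
    (A := fun t => fderiv ℂ (F 0 t) (φ0 t)) hθpos
    (fun n => Periodic.natCast_of_dvd (hFper n) hθ₀θ) (Periodic.natCast_of_dvd hUper hθ₀θ)
    (Periodic.natCast_of_dvd hper (hθ ▸ Nat.dvd_lcm_right θ₀ θ₁)) hUopen
    (fun n t => (hC1 n t).differentiableOn one_ne_zero) hDnear hweak (fun n => hΓ₀nn _) hΓlim
    hdefect
  obtain ⟨N, hN⟩ := eventually_atTop.1 (hev.and (eventually_ge_atTop 1))
  refine ⟨ρ₀, hρ₀, K₀, hK₀, N, (hN N le_rfl).2, fun n hn => ?_⟩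
  obtain ⟨φ, hφU, hφsol, hφper, hφρ, huniq, hφK, hφhyp⟩ := (hN n hn).1
  exact ⟨φ, hφU, hφsol, hφper, hφρ, fun ψ _ => huniq ψ, hφK, hφhyp⟩

/-- Theorem 2.2: persistence of weakly hyperbolic periodic solutions. Under the stated
smoothness, uniform continuity, equicontinuity and compactness assumptions on the
`θ₀`-periodic right-hand sides `F_t^n` and the consistency assumptions
`‖F_t^n(φ_t^0) − F_t^0(φ_t^0)‖ ≤ Γ₀(1/n)`,
`‖DF_t^n(φ_t^0) − DF_t^0(φ_t^0)‖ → 0`, every weakly hyperbolic `θ₁`-periodic solution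
`φ⁰` of the unperturbed equation persists: for every sufficiently large `n` there is a
`θ`-periodic solution `φⁿ` (θ = lcm(θ₀,θ₁)), unique in a `ρ₀`-neighborhood of `φ⁰`,
weakly hyperbolic, and satisfying `sup_t ‖φ_t^n − φ_t^0‖ ≤ K₀ Γ₀(1/n)`. -/
theorem perturbed_periodic_solutions
    {X : Type*} [NormedAddCommGroup X] [NormedSpace ℂ X] [CompleteSpace X]
    (θ₀ θ₁ θ : ℕ) (hθ₀ : 0 < θ₀) (hθ₁ : 0 < θ₁) (hθ : θ = Nat.lcm θ₀ θ₁)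
    (U : ℤ → Set X) (hUopen : ∀ t, IsOpen (U t)) (hUper : ∀ t : ℤ, U (t + θ₀) = U t)
    (F : ℕ → ℤ → X → X) (hFper : ∀ (n : ℕ) (t : ℤ), F n (t + θ₀) = F n t)
    -- (i) every F_t^n is continuously differentiable on U_t
    (hC1 : ∀ (n : ℕ) (t : ℤ), ContDiffOn ℂ 1 (F n t) (U t))
    -- (ii) DF_t^n uniformly continuous on bounded sets, uniformly in n ∈ ℕ
    (hUC : ∀ t : ℤ, 0 ≤ t → t < θ₀ → ∀ B : Set X, B ⊆ U t → Bornology.IsBounded B →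
      ∀ ε : ℝ, 0 < ε → ∃ δ : ℝ, 0 < δ ∧ ∀ n : ℕ, 1 ≤ n → ∀ u ∈ B, ∀ v ∈ B,
        ‖u - v‖ < δ → ‖fderiv ℂ (F n t) u - fderiv ℂ (F n t) v‖ ≤ ε)
    -- (ii) the family {DF_t^n}_{n∈ℕ} is equicontinuous
    (hequi : ∀ t : ℤ, 0 ≤ t → t < θ₀ → ∀ u ∈ U t, ∀ ε : ℝ, 0 < ε →
      ∃ δ : ℝ, 0 < δ ∧ ∀ n : ℕ, 1 ≤ n → ∀ v ∈ U t, ‖v - u‖ < δ →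
        ‖fderiv ℂ (F n t) v - fderiv ℂ (F n t) u‖ ≤ ε)
    -- (ii) for every n there is a time with compact-operator-valued derivative
    (hcomp : ∀ n : ℕ, 1 ≤ n → ∃ t : ℤ, 0 ≤ t ∧ t < θ₀ ∧ ∀ u ∈ U t,
      IsCompactOperator (fderiv ℂ (F n t) u))
    -- φ⁰ is a θ₁-periodic solution of the unperturbed equation
    (φ0 : ℤ → X) (hmem : ∀ t : ℤ, φ0 t ∈ U t)
    (hsol : ∀ t : ℤ, φ0 (t + 1) = F 0 t (φ0 t))
    (hper : ∀ t : ℤ, φ0 (t + θ₁) = φ0 t)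
    -- weak hyperbolicity: 1 ∉ σ(Ξ_θ^0)
    (hweak : (1 : ℂ) ∉ spectrum ℂ (prodOp (fun t => fderiv ℂ (F 0 t) (φ0 t)) θ))
    -- consistency assumptions (2.7) and (2.8)
    (Γ₀ : ℝ → ℝ) (hΓ₀nn : ∀ ϱ : ℝ, 0 ≤ Γ₀ ϱ)
    (hΓ₀lim : Tendsto Γ₀ (nhdsWithin 0 (Set.Ioi 0)) (nhds 0))
    (hFconv : ∀ t : ℤ, 0 ≤ t → t < θ → ∀ n : ℕ, 1 ≤ n →
      ‖F n t (φ0 t) - F 0 t (φ0 t)‖ ≤ Γ₀ (1 / (n : ℝ)))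
    (hDconv : ∀ t : ℤ, 0 ≤ t → t < θ →
      Tendsto (fun n : ℕ => ‖fderiv ℂ (F n t) (φ0 t) - fderiv ℂ (F 0 t) (φ0 t)‖)
        atTop (nhds 0)) :
    ∃ ρ₀ : ℝ, 0 < ρ₀ ∧ ∃ K₀ : ℝ, 0 ≤ K₀ ∧ ∃ N₀ : ℕ, 1 ≤ N₀ ∧
      ∀ n : ℕ, N₀ ≤ n → ∃ φn : ℤ → X,
        -- φⁿ is a θ-periodic solution of the n-th equation in B_{ρ₀}(φ⁰)
        (∀ t : ℤ, φn t ∈ U t) ∧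
        (∀ t : ℤ, φn (t + 1) = F n t (φn t)) ∧
        (∀ t : ℤ, φn (t + θ) = φn t) ∧
        (∀ t : ℤ, ‖φn t - φ0 t‖ ≤ ρ₀) ∧
        -- uniqueness among θ-periodic solutions in B_{ρ₀}(φ⁰)
        (∀ ψ : ℤ → X, (∀ t : ℤ, ψ t ∈ U t) → (∀ t : ℤ, ψ (t + 1) = F n t (ψ t)) →
          (∀ t : ℤ, ψ (t + θ) = ψ t) → (∀ t : ℤ, ‖ψ t - φ0 t‖ ≤ ρ₀) → ψ = φn) ∧
        -- convergence estimate (2.9)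
        (∀ t : ℤ, ‖φn t - φ0 t‖ ≤ K₀ * Γ₀ (1 / (n : ℝ))) ∧
        -- φⁿ is weakly hyperbolic
        (1 : ℂ) ∉ spectrum ℂ (prodOp (fun t => fderiv ℂ (F n t) (φn t)) θ) :=
  perturbed_periodic_solutions_general θ₀ θ₁ θ hθ₀ hθ₁ hθ U hUopen hUper F hFper hC1 hequi φ0 hmem
    hsol hper hweak Γ₀ hΓ₀nn hΓ₀lim hFconv hDconv
end

section
/- Under the hypotheses of the persistence theorem for periodic solutions — X a complex Banach space; θ₀-periodic C¹ maps F_t^n : U_t → X (n ∈ ℕ₀) with DF_t^n uniformly continuous on bounded sets uniformly in n ∈ ℕ, {DF_t^n}_{n∈ℕ} equicontinuous, and for each n ∈ ℕ some 0 ≤ t < θ₀ with DF_t^n compact-operator-valued; φ⁰ a θ₁-periodic solution of u_{t+1} = F_t^0(u_t); θ := lcm(θ₀,θ₁); ‖F_t^n(φ_t^0) − F_t^0(φ_t^0)‖ ≤ Γ₀(1/n) with lim_{ϱ↘0} Γ₀(ϱ) = 0 and lim_{n→∞} ‖DF_t^n(φ_t^0) − DF_t^0(φ_t^0)‖ = 0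 for 0 ≤ t < θ — assume additionally that φ⁰ is hyperbolic, i.e. σ(Ξ_θ^0) ∩ 𝕊¹ = ∅ where Ξ_θ^0 := DF_{θ−1}^0(φ_{θ−1}^0) ∘ ⋯ ∘ DF_0^0(φ_0^0) and 𝕊¹ = {z ∈ ℂ : |z| = 1}. Then there exists N ∈ ℕ such that for all n ≥ N the θ-periodic solutions φⁿ of u_{t+1} = F_t^n(u_t) obtained from the persistence theorem are hyperbolic as well: σ(DF_{θ−1}^n(φ_{θ−1}^n) ∘ ⋯ ∘ DF_0^n(φ_0^n)) ∩ 𝕊¹ = ∅. -/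
/-!
The perturbed solutions are the fixed points near `φ⁰₀` of the period maps
`Πₙ = F_{θ-1}^n ∘ ⋯ ∘ F_0^n`. By the mean value theorem and the locally uniform convergence of the
derivatives (equicontinuity plus convergence at `φ⁰`), on a fixed ball around `φ⁰_j` every `F_j^n`
differs from the linear map `A_j = DF_j^0(φ⁰_j)` by a `c`-Lipschitz map once `n` is large.
Composing such maps shows that `Πₙ` differs from `Ξ_θ^0 = A_{θ-1} ∘ ⋯ ∘ A_0` by a
`((C + c)^θ - C^θ)`-Lipschitz map on a ball, where `C` bounds the `‖A_j‖`. As `1 - Ξ_θ^0` is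
invertible, Newton's map `x ↦ x - (1 - Ξ_θ^0)⁻¹ (x - Πₙ x)` is then a contraction of that ball, and
its fixed point generates `φⁿ`. The same composition estimate applied to the linear maps
`DF_j^n(φⁿ_j)` shows `‖Ξ_θ^n - Ξ_θ^0‖ ≤ (C + c)^θ - C^θ`, and since the set of operators whose
spectrum misses the compact set `𝕊¹` is open, `σ(Ξ_θ^n) ∩ 𝕊¹ = ∅` for small `c`.
-/

open Filter Topology

open Function Metric Set
open scoped NNReal

namespace Function.Periodic

theorem of_dvd {α : Type*} {f : ℤ → α} {a b : ℕ} (hf : Periodic f a) (hab : a ∣ b) :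
    Periodic f b := by
  obtain ⟨m, rfl⟩ := hab
  simpa [mul_comm] using hf.nat_mul m

theorem forall_of_forall_mem_Ico {P : ℤ → Prop} {p : ℤ} (hP : Periodic P p) (hp : 0 < p)
    (h : ∀ t ∈ Ico 0 p, P t) (t : ℤ) : P t := by
  have hmod : t - t / p * p = t % p := by rw [Int.emod_def]; ring
  rw [← hP.sub_int_mul_eq (t / p), Int.cast_id, hmod]
  exact h _ ⟨Int.emod_nonneg t hp.ne', Int.emod_lt_of_pos t hp⟩

theorem forall_of_forall_natCast {P : ℤ → Prop} {p : ℤ} (hP : Periodic P p) (hp : 0 < p)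
    (h : ∀ k : ℕ, P k) (t : ℤ) : P t :=
  hP.forall_of_forall_mem_Ico hp (fun t ht => by lift t to ℕ using ht.1; exact h t) t

end Function.Periodic

section Evolution

variable {α : Type*}

def evolutionMap (f : ℤ → α → α) : ℕ → α → α
  | 0 => id
  | k + 1 => f k ∘ evolutionMap f k

@[simp] theorem evolutionMap_zero (f : ℤ → α → α) : evolutionMap f 0 = id := rfl

@[simp] theorem evolutionMap_succ (f : ℤ → α → α) (k : ℕ) :
    evolutionMap f (k + 1) = f k ∘ evolutionMap f k := rfl

theorem eq_evolutionMap_of_solution {f : ℤ → α → α} {ψ : ℤ → α}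
    (hψ : ∀ t, ψ (t + 1) = f t (ψ t)) (k : ℕ) : ψ k = evolutionMap f k (ψ 0) := by
  induction k with
  | zero => rfl
  | succ k ih => rw [evolutionMap_succ, comp_apply, ← ih, ← hψ]; push_cast; rfl

theorem periodic_evolutionMap {f : ℤ → α → α} {θ : ℕ} (hf : Periodic f θ) {ξ : α}
    (hξ : evolutionMap f θ ξ = ξ) : Periodic (fun k => evolutionMap f k ξ) θ := by
  intro k
  induction k with
  | zero => simpa using hξ
  | succ k ih =>
    simp only at ih ⊢
    rw [Nat.add_right_comm, evolutionMap_succ, evolutionMap_succ, comp_apply, comp_apply, ih,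
      Nat.cast_add, hf]

theorem exists_periodic_solution_of_evolutionMap_eq {f : ℤ → α → α} {θ : ℕ} (hθ : 0 < θ)
    (hf : Periodic f θ) {ξ : α} (hξ : evolutionMap f θ ξ = ξ) :
    ∃ φ : ℤ → α, Periodic φ θ ∧ (∀ t, φ (t + 1) = f t (φ t)) ∧
      ∀ k : ℕ, φ k = evolutionMap f k ξ := by
  set φ : ℤ → α := fun t => evolutionMap f (t % θ).toNat ξ
  have hφ : Periodic φ θ := fun t => by simp only [φ, Int.add_emod_right]
  have hφnat (k : ℕ) : φ k = evolutionMap f k ξ := by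
    simp only [φ]
    rw [← Int.natCast_mod, Int.toNat_natCast]
    exact (periodic_evolutionMap hf hξ).map_mod_nat k
  refine ⟨φ, hφ, fun t => ?_, hφnat⟩
  refine (Periodic.forall_of_forall_natCast (P := fun t => φ (t + 1) = f t (φ t)) ?_
    (Int.natCast_pos.2 hθ) ?_) t
  · intro t
    simp only [add_right_comm t (θ : ℤ) 1, hφ (t + 1), hφ t, hf t]
  · intro k
    simpa [hφnat] using hφnat (k + 1)

theorem eq_of_periodic_solution {f : ℤ → α → α} {θ : ℕ} (hθ : 0 < θ) {φ ψ : ℤ → α}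
    (hφ : Periodic φ θ) (hψ : Periodic ψ θ) (hφs : ∀ t, φ (t + 1) = f t (φ t))
    (hψs : ∀ t, ψ (t + 1) = f t (ψ t)) (h0 : φ 0 = ψ 0) : φ = ψ := by
  funext t
  refine (Periodic.forall_of_forall_natCast (P := fun t => φ t = ψ t) ?_
    (Int.natCast_pos.2 hθ) ?_) t
  · intro t
    simp only [hφ t, hψ t]
  · intro k
    rw [eq_evolutionMap_of_solution hφs, eq_evolutionMap_of_solution hψs, h0]

end Evolution

namespace ApproximatesLinearOn

variable {𝕜 : Type*} [NontriviallyNormedField 𝕜] {E F G : Type*}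
  [NormedAddCommGroup E] [NormedSpace 𝕜 E] [NormedAddCommGroup F] [NormedSpace 𝕜 F]
  [NormedAddCommGroup G] [NormedSpace 𝕜 G]

theorem norm_sub_le {f : E → F} {A : E →L[𝕜] F} {s : Set E} {c : ℝ≥0}
    (hf : ApproximatesLinearOn f A s c) {a b : E} (ha : a ∈ s) (hb : b ∈ s) :
    ‖f a - f b‖ ≤ (‖A‖₊ + c) * ‖a - b‖ :=
  calc ‖f a - f b‖ ≤ ‖f a - f b - A (a - b)‖ + ‖A (a - b)‖ := norm_le_norm_sub_add _ _
    _ ≤ c * ‖a - b‖ + ‖A‖ * ‖a - b‖ := add_le_add (hf a ha b hb) (A.le_opNorm _)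
    _ = (‖A‖₊ + c) * ‖a - b‖ := by push_cast; ring

theorem comp {g : E → F} {f : F → G} {A : E →L[𝕜] F} {B : F →L[𝕜] G} {s : Set E} {t : Set F}
    {c d : ℝ≥0} (hf : ApproximatesLinearOn f B t d) (hg : ApproximatesLinearOn g A s c)
    (hst : MapsTo g s t) :
    ApproximatesLinearOn (f ∘ g) (B.comp A) s (d * (‖A‖₊ + c) + ‖B‖₊ * c) := by
  intro a ha b hb
  have hsplit : f (g a) - f (g b) - B (A (a - b)) =
      (f (g a) - f (g b) - B (g a - g b)) + B (g a - g b - A (a - b)) := by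
    rw [map_sub B (g a - g b)]; abel
  calc ‖(f ∘ g) a - (f ∘ g) b - (B.comp A) (a - b)‖
      ≤ ‖f (g a) - f (g b) - B (g a - g b)‖ + ‖B (g a - g b - A (a - b))‖ := by
        rw [comp_apply, comp_apply, ContinuousLinearMap.comp_apply, hsplit]; exact norm_add_le _ _
    _ ≤ d * ((‖A‖₊ + c) * ‖a - b‖) + ‖B‖ * (c * ‖a - b‖) := by
        gcongr
        · exact (hf _ (hst ha) _ (hst hb)).trans (by gcongr; exact hg.norm_sub_le ha hb)
        · exact B.le_opNorm_of_le (hg a ha b hb)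
    _ = ↑(d * (‖A‖₊ + c) + ‖B‖₊ * c) * ‖a - b‖ := by push_cast; ring

theorem mapsTo_closedBall {f : E → F} {A : E →L[𝕜] F} {c : ℝ≥0} {p : E} {q : F} {r γ : ℝ}
    (hf : ApproximatesLinearOn f A (closedBall p r) c) (hq : ‖f p - q‖ ≤ γ) :
    MapsTo f (closedBall p r) (closedBall q ((‖A‖₊ + c) * r + γ)) := by
  intro x hx
  have hfx := hf.norm_sub_le hx (mem_closedBall_self (dist_nonneg.trans hx))
  rw [mem_closedBall, dist_eq_norm] at hx ⊢
  calc ‖f x - q‖ ≤ ‖f x - f p‖ + ‖f p - q‖ := norm_sub_le_norm_sub_add_norm_sub _ _ _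
    _ ≤ (‖A‖₊ + c) * ‖x - p‖ + γ := add_le_add hfx hq
    _ ≤ (‖A‖₊ + c) * r + γ := by gcongr

theorem nnnorm_sub_le {T S : E →L[𝕜] F} {c : ℝ≥0} (h : ApproximatesLinearOn T S univ c) :
    ‖T - S‖₊ ≤ c :=
  ContinuousLinearMap.opNNNorm_le_bound _ _ fun x => by
    simpa [← NNReal.coe_le_coe] using h x (mem_univ x) 0 (mem_univ 0)

end ApproximatesLinearOn

theorem ContinuousLinearMap.approximatesLinearOn {𝕜 E F : Type*} [NontriviallyNormedField 𝕜]
    [NormedAddCommGroup E] [NormedSpace 𝕜 E] [NormedAddCommGroup F] [NormedSpace 𝕜 F]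
    (T S : E →L[𝕜] F) (s : Set E) : ApproximatesLinearOn T S s ‖T - S‖₊ := fun a _ b _ => by
  simpa [← map_sub] using (T - S).le_opNorm (a - b)

theorem Convex.approximatesLinearOn_of_nnnorm_fderiv_sub_le {𝕜 E F : Type*}
    [NontriviallyNormedField 𝕜] [IsRCLikeNormedField 𝕜] [NormedAddCommGroup E] [NormedSpace ℝ E]
    [NormedSpace 𝕜 E] [NormedAddCommGroup F] [NormedSpace 𝕜 F]
    {f : E → F} {A : E →L[𝕜] F} {s : Set E} {c : ℝ≥0} (hs : Convex ℝ s)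
    (hf : ∀ v ∈ s, DifferentiableAt 𝕜 f v) (h : ∀ v ∈ s, ‖fderiv 𝕜 f v - A‖₊ ≤ c) :
    ApproximatesLinearOn f A s c := fun _ ha _ hb =>
  hs.norm_image_sub_le_of_norm_fderiv_le' hf (fun v hv => NNReal.coe_le_coe.2 (h v hv)) hb ha

section PeriodOperator

variable {X : Type*} [NormedAddCommGroup X] [NormedSpace ℂ X]

theorem coe_prodOp (A : ℤ → X →L[ℂ] X) (k : ℕ) :
    ⇑(prodOp A k) = evolutionMap (fun t => ⇑(A t)) k := by
  induction k with
  | zero => rfl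
  | succ k ih => rw [prodOp, ContinuousLinearMap.coe_comp, ih]; rfl

theorem nnnorm_prodOp_le {A : ℤ → X →L[ℂ] X} {C : ℝ≥0} {k : ℕ} (hA : ∀ j < k, ‖A j‖₊ ≤ C) :
    ‖prodOp A k‖₊ ≤ C ^ k := by
  induction k with
  | zero => simpa [prodOp, ← NNReal.coe_le_coe] using ContinuousLinearMap.norm_id_le
  | succ k ih =>
    calc ‖prodOp A (k + 1)‖₊ ≤ ‖A k‖₊ * ‖prodOp A k‖₊ := ContinuousLinearMap.opNNNorm_comp_le _ _
      _ ≤ C * C ^ k :=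
        mul_le_mul' (hA k k.lt_succ_self) (ih fun j hj => hA j (hj.trans k.lt_succ_self))
      _ = C ^ (k + 1) := (pow_succ' C k).symm

theorem approximatesLinearOn_evolutionMap {f : ℤ → X → X} {A : ℤ → X →L[ℂ] X} {s : Set X}
    {S : ℕ → Set X} {C c : ℝ≥0} {k : ℕ} (hmaps : ∀ j < k, MapsTo (evolutionMap f j) s (S j))
    (hf : ∀ j < k, ApproximatesLinearOn (f j) (A j) (S j) c) (hA : ∀ j < k, ‖A j‖₊ ≤ C) :
    ApproximatesLinearOn (evolutionMap f k) (prodOp A k) s ((C + c) ^ k - C ^ k) := by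
  induction k with
  | zero => intro a _ b _; simp [prodOp]
  | succ k ih =>
    have hk := k.lt_succ_self
    have ih := ih (fun j hj => hmaps j (hj.trans hk)) (fun j hj => hf j (hj.trans hk))
      (fun j hj => hA j (hj.trans hk))
    refine ((hf k hk).comp ih (hmaps k hk)).mono_num ?_
    have hCk : C ^ k ≤ (C + c) ^ k := pow_le_pow_left₀ zero_le le_self_add k
    have hCk1 : C ^ (k + 1) ≤ (C + c) ^ (k + 1) := pow_le_pow_left₀ zero_le le_self_add _
    calc c * (‖prodOp A k‖₊ + ((C + c) ^ k - C ^ k)) + ‖A k‖₊ * ((C + c) ^ k - C ^ k)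
        ≤ c * (C ^ k + ((C + c) ^ k - C ^ k)) + C * ((C + c) ^ k - C ^ k) := by
          gcongr
          · exact nnnorm_prodOp_le fun j hj => hA j (hj.trans hk)
          · exact hA k hk
      _ = (C + c) ^ (k + 1) - C ^ (k + 1) := by
          rw [← NNReal.coe_inj]
          push_cast [NNReal.coe_sub hCk, NNReal.coe_sub hCk1]
          ring

theorem nnnorm_prodOp_sub_prodOp_le {A B : ℤ → X →L[ℂ] X} {C c : ℝ≥0} {k : ℕ}
    (hA : ∀ j < k, ‖A j‖₊ ≤ C) (hBA : ∀ j < k, ‖B j - A j‖₊ ≤ c) :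
    ‖prodOp B k - prodOp A k‖₊ ≤ (C + c) ^ k - C ^ k := by
  refine ApproximatesLinearOn.nnnorm_sub_le ?_
  rw [coe_prodOp B]
  exact approximatesLinearOn_evolutionMap (S := fun _ => univ) (fun j _ => mapsTo_univ _ _)
    (fun j hj => ((B j).approximatesLinearOn (A j) univ).mono_num (hBA j hj)) hA

theorem mapsTo_evolutionMap_closedBall {f : ℤ → X → X} {A : ℤ → X →L[ℂ] X} {p : ℤ → X}
    {C c : ℝ≥0} {r γ s : ℝ} {k : ℕ} (hCc : 1 ≤ C + c)
    (hf : ∀ j < k, ApproximatesLinearOn (f j) (A j) (closedBall (p j) r) c)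
    (hA : ∀ j < k, ‖A j‖₊ ≤ C) (hp : ∀ j < k, ‖f j (p j) - p (j + 1)‖ ≤ γ) (hγ : 0 ≤ γ)
    (hγs : γ ≤ s) (hsr : (2 * (C + c)) ^ k * s ≤ r) :
    ∀ j ≤ k, MapsTo (evolutionMap f j) (closedBall (p 0) s)
      (closedBall (p j) ((2 * (C + c)) ^ j * s)) := by
  have hD : (1 : ℝ) ≤ C + c := by exact_mod_cast hCc
  have hs : 0 ≤ s := hγ.trans hγs
  intro j
  induction j with
  | zero => intro _; simpa using mapsTo_id _
  | succ j ih =>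
    intro hj
    have hjk : j < k := hj
    have hr : (2 * (C + c) : ℝ) ^ j * s ≤ r :=
      (mul_le_mul_of_nonneg_right (pow_le_pow_right₀ (by linarith) hjk.le) hs).trans hsr
    -- each step multiplies the radius by at most `C + c` and adds `γ ≤ s`; doubling absorbs `γ`
    have hstep : (‖A j‖₊ + c) * ((2 * (C + c)) ^ j * s) + γ ≤ (2 * (C + c)) ^ (j + 1) * s := by
      have hAj : (‖A j‖₊ : ℝ) + c ≤ C + c := by gcongr; exact_mod_cast hA j hjk
      have h1 : (1 : ℝ) ≤ (C + c) * (2 * (C + c)) ^ j :=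
        one_le_mul_of_one_le_of_one_le hD (one_le_pow₀ (by linarith))
      calc (‖A j‖₊ + c) * ((2 * (C + c)) ^ j * s) + γ
          ≤ (C + c) * ((2 * (C + c)) ^ j * s) + (C + c) * (2 * (C + c)) ^ j * s := by
            gcongr; nlinarith
        _ = (2 * (C + c)) ^ (j + 1) * s := by ring
    rw [evolutionMap_succ, Nat.cast_succ]
    exact ((((hf j hjk).mono_set (closedBall_subset_closedBall hr)).mapsTo_closedBall
      (hp j hjk)).mono_right (closedBall_subset_closedBall hstep)).comp (ih hjk.le)

end PeriodOperator

theorem exists_fixedPoint_of_approximatesLinearOn {𝕜 E : Type*} [NontriviallyNormedField 𝕜]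
    [NormedAddCommGroup E] [NormedSpace 𝕜 E] [CompleteSpace E] {P : E → E} {Ξ : E →L[𝕜] E}
    (hΞ : IsUnit (1 - Ξ)) {p : E} {ρ : ℝ} {c : ℝ≥0}
    (hP : ApproximatesLinearOn P Ξ (closedBall p ρ) c)
    (hc : ‖Ring.inverse (1 - Ξ)‖₊ * c ≤ 2⁻¹) (hp : 2 * ‖Ring.inverse (1 - Ξ)‖ * ‖P p - p‖ ≤ ρ) :
    ∃ ξ ∈ closedBall p ρ, P ξ = ξ ∧ ‖ξ - p‖ ≤ 2 * ‖Ring.inverse (1 - Ξ)‖ * ‖P p - p‖ ∧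
      ∀ x ∈ closedBall p ρ, P x = x → x = ξ := by
  set L := Ring.inverse (1 - Ξ)
  have hL (v : E) : L ((1 - Ξ) v) = v := DFunLike.congr_fun (Ring.inverse_mul_cancel _ hΞ) v
  have hL' (v : E) : (1 - Ξ) (L v) = v := DFunLike.congr_fun (Ring.mul_inverse_cancel _ hΞ) v
  -- Newton's map for `x = P x`, with the derivative of `x - P x` frozen at `1 - Ξ`
  set N : E → E := fun x => x - L (x - P x)
  have hNfix (x : E) : N x = x ↔ P x = x := by
    refine ⟨fun h => ?_, fun h => by simp [N, h]⟩
    have h0 := hL' (x - P x)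
    rw [sub_eq_self.1 h, map_zero] at h0
    exact (sub_eq_zero.1 h0.symm).symm
  have hNlip : ∀ x ∈ closedBall p ρ, ∀ y ∈ closedBall p ρ, ‖N x - N y‖ ≤ 2⁻¹ * ‖x - y‖ := by
    intro x hx y hy
    have hNsub : N x - N y = L (P x - P y - Ξ (x - y)) := by
      have : P x - P y - Ξ (x - y) = (1 - Ξ) (x - y) - ((x - P x) - (y - P y)) := by
        simp only [sub_apply, one_apply_eq_self]; abel
      rw [this, map_sub, hL]
      simp only [N, map_sub]
      abel
    calc ‖N x - N y‖ ≤ ‖L‖ * (c * ‖x - y‖) := by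
          rw [hNsub]; exact L.le_opNorm_of_le (hP x hx y hy)
      _ = ↑(‖L‖₊ * c) * ‖x - y‖ := by push_cast; ring
      _ ≤ 2⁻¹ * ‖x - y‖ := by gcongr; exact_mod_cast hc
  have hNp : ‖N p - p‖ ≤ ‖L‖ * ‖P p - p‖ := by
    simpa [N] using L.le_opNorm (P p - p)
  have hp0 : p ∈ closedBall p ρ :=
    mem_closedBall_self ((by positivity : (0 : ℝ) ≤ 2 * ‖L‖ * ‖P p - p‖).trans hp)
  have hmaps : MapsTo N (closedBall p ρ) (closedBall p ρ) := by
    intro x hx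
    rw [mem_closedBall, dist_eq_norm] at hx ⊢
    calc ‖N x - p‖ ≤ ‖N x - N p‖ + ‖N p - p‖ := norm_sub_le_norm_sub_add_norm_sub _ _ _
      _ ≤ 2⁻¹ * ‖x - p‖ + ‖L‖ * ‖P p - p‖ :=
        add_le_add (hNlip x (mem_closedBall_iff_norm.2 hx) p hp0) hNp
      _ ≤ ρ := by linarith
  have : CompleteSpace (closedBall p ρ) := isClosed_closedBall.completeSpace_coe
  have : Nonempty (closedBall p ρ) := ⟨⟨p, hp0⟩⟩
  have hcontr : ContractingWith 2⁻¹ (hmaps.restrict N _ _) := by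
    refine ⟨by norm_num, LipschitzWith.of_dist_le_mul fun x y => ?_⟩
    simpa [Subtype.dist_eq, dist_eq_norm] using hNlip x x.2 y y.2
  set ξ := ContractingWith.fixedPoint _ hcontr
  refine ⟨ξ, ξ.2, (hNfix ξ).1 (congrArg Subtype.val hcontr.fixedPoint_isFixedPt), ?_, ?_⟩
  · have hdist : dist ξ ⟨p, hp0⟩ ≤ 2 * ‖N p - p‖ := by
      rw [dist_comm]
      refine (hcontr.dist_fixedPoint_le ⟨p, hp0⟩).trans_eq ?_
      norm_num [Subtype.dist_eq, dist_eq_norm, norm_sub_rev p]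
      ring
    rw [Subtype.dist_eq, dist_eq_norm] at hdist
    linarith
  · intro x hx hPx
    exact congrArg Subtype.val
      (hcontr.fixedPoint_unique (x := ⟨x, hx⟩) (Subtype.ext ((hNfix x).2 hPx)))

theorem exists_periodic_solution_of_approximatesLinearOn {X : Type*} [NormedAddCommGroup X]
    [NormedSpace ℂ X] [CompleteSpace X] {θ : ℕ} (hθ : 0 < θ) {f : ℤ → X → X}
    (hf : Periodic f θ) {p : ℤ → X} (hp : Periodic p θ) {A : ℤ → X →L[ℂ] X}
    (hΞ : IsUnit (1 - prodOp A θ)) {C c : ℝ≥0} {r ρ K γ : ℝ} (hA : ∀ j < θ, ‖A j‖₊ ≤ C)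
    (hCc : 1 ≤ C + c) (hfA : ∀ j < θ, ApproximatesLinearOn (f j) (A j) (closedBall (p j) r) c)
    (hfp : ∀ j < θ, ‖f j (p j) - p (j + 1)‖ ≤ γ) (hγ : 0 ≤ γ)
    (hc : ‖Ring.inverse (1 - prodOp A θ)‖₊ * ((C + c) ^ θ - C ^ θ) ≤ 2⁻¹)
    (hρ : (2 * (C + c)) ^ θ * ρ ≤ r)
    (hK : (2 * (C + c)) ^ θ * (2 * ‖Ring.inverse (1 - prodOp A θ)‖ * (2 * (C + c)) ^ θ + 1) ≤ K)
    (hKγ : K * γ ≤ ρ) :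
    ∃ φ : ℤ → X, Periodic φ θ ∧ (∀ t, φ (t + 1) = f t (φ t)) ∧ (∀ t, ‖φ t - p t‖ ≤ K * γ) ∧
      ∀ ψ : ℤ → X, Periodic ψ θ → (∀ t, ψ (t + 1) = f t (ψ t)) → (∀ t, ‖ψ t - p t‖ ≤ ρ) →
        ψ = φ := by
  set D : ℝ := 2 * (C + c)
  set M := ‖Ring.inverse (1 - prodOp A θ)‖
  have hD : 1 ≤ D := by
    have : (1 : ℝ) ≤ C + c := by exact_mod_cast hCc
    linarith
  have hDθ : 1 ≤ D ^ θ := one_le_pow₀ hD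
  have hMDθ : 0 ≤ 2 * M * D ^ θ := by positivity
  have hKγ' : D ^ θ * ((2 * M * D ^ θ + 1) * γ) ≤ K * γ := by
    rw [← mul_assoc]; exact mul_le_mul_of_nonneg_right hK hγ
  have hDγ : D ^ θ * γ ≤ ρ := by
    refine le_trans ?_ (hKγ'.trans hKγ)
    gcongr
    nlinarith
  have hγρ : γ ≤ ρ := (le_mul_of_one_le_left hγ hDθ).trans hDγ
  have hρ0 : 0 ≤ ρ := hγ.trans hγρ
  have hρr : ρ ≤ r := (le_mul_of_one_le_left hρ0 hDθ).trans hρ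
  have hball (s : ℝ) (hγs : γ ≤ s) (hs : D ^ θ * s ≤ r) :=
    mapsTo_evolutionMap_closedBall hCc hfA hA hfp hγ hγs hs
  have hPp : ‖evolutionMap f θ (p 0) - p 0‖ ≤ D ^ θ * γ := by
    have := hball γ le_rfl (hDγ.trans hρr) θ le_rfl (mem_closedBall_self hγ)
    rwa [mem_closedBall, dist_eq_norm, hp.eq] at this
  have hPA : ApproximatesLinearOn (evolutionMap f θ) (prodOp A θ) (closedBall (p 0) ρ)
      ((C + c) ^ θ - C ^ θ) :=
    approximatesLinearOn_evolutionMap (S := fun j => closedBall (p j) (D ^ j * ρ))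
      (fun j hj => hball ρ hγρ hρ j hj.le)
      (fun j hj => (hfA j hj).mono_set (closedBall_subset_closedBall
        ((mul_le_mul_of_nonneg_right (pow_le_pow_right₀ hD hj.le) hρ0).trans hρ))) hA
  obtain ⟨ξ, -, hξ, hξp, huniq⟩ := exists_fixedPoint_of_approximatesLinearOn hΞ hPA hc
    (by nlinarith)
  obtain ⟨φ, hφ, hφs, hφξ⟩ := exists_periodic_solution_of_evolutionMap_eq hθ hf hξ
  refine ⟨φ, hφ, hφs, fun t => ?_, fun ψ hψ hψs hψρ => ?_⟩
  · refine Periodic.forall_of_forall_mem_Ico (P := fun t => ‖φ t - p t‖ ≤ K * γ)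
      (fun t => by simp only [hφ t, hp t]) (Int.natCast_pos.2 hθ) (fun t ht => ?_) t
    lift t to ℕ using ht.1
    -- `K γ` bounds the orbit of `ξ`, which starts within `2 M D ^ θ γ` of `p 0`
    have hξs : ξ ∈ closedBall (p 0) ((2 * M * D ^ θ + 1) * γ) := by
      rw [mem_closedBall, dist_eq_norm]; nlinarith
    have := hball _ (by nlinarith) ((hKγ'.trans hKγ).trans hρr) t (by exact_mod_cast ht.2.le) hξs
    rw [mem_closedBall, dist_eq_norm, ← hφξ] at this
    refine this.trans (le_trans ?_ hKγ')
    exact mul_le_mul_of_nonneg_right (pow_le_pow_right₀ hD (by exact_mod_cast ht.2.le))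
      (by nlinarith)
  · refine eq_of_periodic_solution hθ hψ hφ hψs hφs ?_
    have hψ0 : evolutionMap f θ (ψ 0) = ψ 0 := by
      rw [← eq_evolutionMap_of_solution hψs θ, hψ.eq]
    rw [huniq (ψ 0) (mem_closedBall_iff_norm.2 (hψρ 0)) hψ0]
    simpa using (hφξ 0).symm

theorem NNReal.tendsto_add_pow_sub_pow (C : ℝ≥0) (k : ℕ) :
    Tendsto (fun c : ℝ≥0 => (C + c) ^ k - C ^ k) (𝓝 0) (𝓝 0) := by
  have : Continuous fun c : ℝ≥0 => (C + c) ^ k - C ^ k := by fun_prop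
  simpa using this.tendsto 0

theorem spectrum.eventually_inter_eq_empty {𝕜 A : Type*} [NontriviallyNormedField 𝕜]
    [NormedRing A] [NormedAlgebra 𝕜 A] [CompleteSpace A] {a : A} {K : Set 𝕜}
    (hK : IsCompact K) (h : spectrum 𝕜 a ∩ K = ∅) : ∀ᶠ b in 𝓝 a, spectrum 𝕜 b ∩ K = ∅ := by
  have hunit : ∀ᶠ b in 𝓝 a, ∀ z ∈ K, IsUnit (algebraMap 𝕜 A z - b) := by
    refine hK.eventually_forall_of_forall_eventually fun z hz => ?_
    have hcont : Continuous fun q : A × 𝕜 => algebraMap 𝕜 A q.2 - q.1 :=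
      ((continuous_algebraMap 𝕜 A).comp continuous_snd).sub continuous_fst
    exact hcont.continuousAt.eventually (Units.isOpen.mem_nhds
      (spectrum.notMem_iff.1 fun hza => eq_empty_iff_forall_notMem.1 h z ⟨hza, hz⟩))
  filter_upwards [hunit] with b hb
  exact eq_empty_iff_forall_notMem.2 fun z ⟨hzb, hzK⟩ => spectrum.mem_iff.1 hzb (hb z hzK)

theorem eventually_spectrum_prodOp_inter_eq_empty {X : Type*} [NormedAddCommGroup X]
    [NormedSpace ℂ X] [CompleteSpace X] {A : ℤ → X →L[ℂ] X} {C : ℝ≥0} {θ : ℕ}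
    (hA : ∀ j < θ, ‖A j‖₊ ≤ C) {K : Set ℂ} (hK : IsCompact K)
    (h : spectrum ℂ (prodOp A θ) ∩ K = ∅) :
    ∀ᶠ c in 𝓝 (0 : ℝ≥0), ∀ B : ℤ → X →L[ℂ] X, (∀ j < θ, ‖B j - A j‖₊ ≤ c) →
      spectrum ℂ (prodOp B θ) ∩ K = ∅ := by
  obtain ⟨η, hη, hspec⟩ := Metric.eventually_nhds_iff.1 (spectrum.eventually_inter_eq_empty hK h)
  filter_upwards [(NNReal.tendsto_coe.2 (C.tendsto_add_pow_sub_pow θ)).eventually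
    (gt_mem_nhds hη)] with c hc B hB
  refine hspec (lt_of_le_of_lt ?_ hc)
  rw [dist_eq_norm, ← coe_nnnorm]
  exact_mod_cast nnnorm_prodOp_sub_prodOp_le hA hB

theorem eventually_forall_closedBall_dist_le {ι X Y : Type*} [PseudoMetricSpace X]
    [PseudoMetricSpace Y] {l : Filter ι} {g : ι → X → Y} {S : Set X} {x : X} {a : Y}
    (hS : S ∈ 𝓝 x)
    (hequi : ∀ ε > 0, ∃ δ > 0, ∀ᶠ i in l, ∀ v ∈ S, dist v x < δ → dist (g i v) (g i x) ≤ ε)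
    (hlim : Tendsto (fun i => g i x) l (𝓝 a)) {ε : ℝ} (hε : 0 < ε) :
    ∀ᶠ r in 𝓝 (0 : ℝ), ∀ᶠ i in l, ∀ v ∈ closedBall x r, dist (g i v) a ≤ ε := by
  obtain ⟨δ, hδ, hgδ⟩ := hequi (ε / 2) (half_pos hε)
  filter_upwards [eventually_closedBall_subset hS, Iio_mem_nhds hδ] with r hrS hrδ
  filter_upwards [hgδ, hlim (closedBall_mem_nhds a (half_pos hε))] with i hi hia v hv
  calc dist (g i v) a ≤ dist (g i v) (g i x) + dist (g i x) a := dist_triangle _ _ _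
    _ ≤ ε / 2 + ε / 2 :=
      add_le_add (hi v (hrS hv) ((mem_closedBall.1 hv).trans_lt hrδ)) (mem_closedBall.1 hia)
    _ = ε := add_halves ε

theorem exists_pos_closedBall_subset_and_eventually_nnnorm_fderiv_sub_le {X : Type*}
    [NormedAddCommGroup X] [NormedSpace ℂ X] {F : ℕ → ℤ → X → X} {U : ℤ → Set X}
    {φ : ℤ → X} {A : ℤ → X →L[ℂ] X} {θ : ℕ} (hU : ∀ t, IsOpen (U t)) (hφ : ∀ t, φ t ∈ U t)
    (hequi : ∀ t, ∀ u ∈ U t, ∀ ε > 0, ∃ δ > 0, ∀ᶠ n in atTop, ∀ v ∈ U t,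
      dist v u < δ → dist (fderiv ℂ (F n t) v) (fderiv ℂ (F n t) u) ≤ ε)
    (hlim : ∀ j < θ, Tendsto (fun n => fderiv ℂ (F n j) (φ j)) atTop (𝓝 (A j)))
    {c : ℝ≥0} (hc : 0 < c) :
    ∃ r > 0, (∀ j < θ, closedBall (φ j) r ⊆ U j) ∧
      ∀ᶠ n in atTop, ∀ j < θ, ∀ v ∈ closedBall (φ j) r, ‖fderiv ℂ (F n j) v - A j‖₊ ≤ c := by
  have hsmall : ∀ j ∈ Finset.range θ, ∀ᶠ r in 𝓝 (0 : ℝ), closedBall (φ j) r ⊆ U j ∧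
      ∀ᶠ n in atTop, ∀ v ∈ closedBall (φ j) r, dist (fderiv ℂ (F n j) v) (A j) ≤ c :=
    fun j hj => (eventually_closedBall_subset ((hU j).mem_nhds (hφ j))).and
      (eventually_forall_closedBall_dist_le ((hU j).mem_nhds (hφ j)) (hequi j (φ j) (hφ j))
        (hlim j (Finset.mem_range.1 hj)) hc)
  obtain ⟨r, hr, hr0⟩ := (((Finset.eventually_all _).2 hsmall).filter_mono nhdsWithin_le_nhds
    |>.and (self_mem_nhdsWithin (s := Ioi 0))).exists
  refine ⟨r, hr0, fun j hj => (hr j (Finset.mem_range.2 hj)).1, ?_⟩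
  filter_upwards [(Finset.eventually_all _).2 fun j hj => (hr j hj).2] with n hn j hj v hv
  simpa [dist_eq_norm, ← NNReal.coe_le_coe] using hn j (Finset.mem_range.2 hj) v hv

theorem eventually_exists_perturbed_periodic_solution {X : Type*} [NormedAddCommGroup X]
    [NormedSpace ℂ X] [CompleteSpace X] {θ : ℕ} (hθ : 0 < θ) {U : ℤ → Set X}
    (hU : ∀ t, IsOpen (U t)) (hUθ : Periodic U θ) {F : ℕ → ℤ → X → X}
    (hFθ : ∀ n, Periodic (F n) θ) (hF : ∀ n t, DifferentiableOn ℂ (F n t) (U t))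
    (hequi : ∀ t, ∀ u ∈ U t, ∀ ε > 0, ∃ δ > 0, ∀ᶠ n in atTop, ∀ v ∈ U t,
      dist v u < δ → dist (fderiv ℂ (F n t) v) (fderiv ℂ (F n t) u) ≤ ε)
    {φ : ℤ → X} (hφU : ∀ t, φ t ∈ U t) (hφ : ∀ t, φ (t + 1) = F 0 t (φ t))
    (hφθ : Periodic φ θ) (hweak : 1 ∉ spectrum ℂ (prodOp (fun t => fderiv ℂ (F 0 t) (φ t)) θ))
    {S : Set ℂ} (hS : IsCompact S)
    (hspec : spectrum ℂ (prodOp (fun t => fderiv ℂ (F 0 t) (φ t)) θ) ∩ S = ∅)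
    {γ : ℕ → ℝ} (hγ0 : ∀ n, 0 ≤ γ n) (hγ : Tendsto γ atTop (𝓝 0))
    (hFφ : ∀ᶠ n in atTop, ∀ j < θ, ‖F n j (φ j) - F 0 j (φ j)‖ ≤ γ n)
    (hDF : ∀ j < θ,
      Tendsto (fun n => fderiv ℂ (F n j) (φ j)) atTop (𝓝 (fderiv ℂ (F 0 j) (φ j)))) :
    ∃ ρ > 0, ∃ K ≥ 0, ∀ᶠ n in atTop, ∃ φn : ℤ → X, (∀ t, φn t ∈ U t) ∧
      (∀ t, φn (t + 1) = F n t (φn t)) ∧ Periodic φn θ ∧ (∀ t, ‖φn t - φ t‖ ≤ K * γ n) ∧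
      K * γ n ≤ ρ ∧
      (∀ ψ : ℤ → X, Periodic ψ θ → (∀ t, ψ (t + 1) = F n t (ψ t)) → (∀ t, ‖ψ t - φ t‖ ≤ ρ) →
        ψ = φn) ∧
      spectrum ℂ (prodOp (fun t => fderiv ℂ (F n t) (φn t)) θ) ∩ S = ∅ := by
  set A : ℤ → X →L[ℂ] X := fun t => fderiv ℂ (F 0 t) (φ t)
  have hΞ : IsUnit (1 - prodOp A θ) := by simpa using spectrum.notMem_iff.1 hweak
  set M := Ring.inverse (1 - prodOp A θ)
  set C : ℝ≥0 := 1 + ∑ j ∈ Finset.range θ, ‖A j‖₊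
  have hA : ∀ j < θ, ‖A j‖₊ ≤ C := fun j hj => le_add_left
    (Finset.single_le_sum (f := fun i : ℕ => ‖A i‖₊) (fun i _ => zero_le)
      (Finset.mem_range.2 hj))
  have hcontr : ∀ᶠ c in 𝓝 (0 : ℝ≥0), ‖M‖₊ * ((C + c) ^ θ - C ^ θ) ≤ 2⁻¹ := by
    have := (C.tendsto_add_pow_sub_pow θ).const_mul ‖M‖₊
    rw [mul_zero] at this
    exact this.eventually (ge_mem_nhds (by norm_num))
  obtain ⟨c, ⟨hcM, hcS⟩, hc0⟩ := ((hcontr.and (eventually_spectrum_prodOp_inter_eq_empty hA hS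
    hspec)).filter_mono nhdsWithin_le_nhds |>.and (self_mem_nhdsWithin (s := Ioi 0))).exists
  obtain ⟨r, hr0, hrU, hrA⟩ :=
    exists_pos_closedBall_subset_and_eventually_nnnorm_fderiv_sub_le (A := A) hU hφU hequi hDF
      hc0
  set D : ℝ := 2 * (C + c)
  have hCc : 1 ≤ C + c := le_add_right le_self_add
  have hD : 1 ≤ D := by
    have : (1 : ℝ) ≤ C + c := by exact_mod_cast hCc
    linarith
  have hρ : 0 < r / D ^ θ := by positivity
  set K : ℝ := D ^ θ * (2 * ‖M‖ * D ^ θ + 1)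
  refine ⟨r / D ^ θ, hρ, K, by positivity, ?_⟩
  have hKγ := (hγ.const_mul K).eventually (ge_mem_nhds (by simpa using hρ))
  filter_upwards [hrA, hFφ, hKγ] with n hnA hnF hnK
  have hfA (j : ℕ) (hj : j < θ) : ApproximatesLinearOn (F n j) (A j) (closedBall (φ j) r) c :=
    (convex_closedBall _ _).approximatesLinearOn_of_nnnorm_fderiv_sub_le
      (fun v hv => (hF n j).differentiableAt ((hU j).mem_nhds (hrU j hj hv))) (hnA j hj)
  have hfφ (j : ℕ) (hj : j < θ) : ‖F n j (φ j) - φ (j + 1)‖ ≤ γ n := hφ j ▸ hnF j hj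
  obtain ⟨φn, hφn, hφns, hφnK, huniq⟩ := exists_periodic_solution_of_approximatesLinearOn
    hθ (hFθ n) hφθ hΞ hA hCc hfA hfφ (hγ0 n) hcM
    (by rw [mul_div_cancel₀ _ (by positivity)]) le_rfl hnK
  have hφnr (j : ℕ) : φn j ∈ closedBall (φ j) r :=
    mem_closedBall_iff_norm.2 (((hφnK j).trans hnK).trans (div_le_self hr0.le (one_le_pow₀ hD)))
  refine ⟨φn, fun t => ?_, hφns, hφn, hφnK, hnK, huniq, hcS _ fun j hj => hnA j hj _ (hφnr j)⟩
  refine Periodic.forall_of_forall_mem_Ico (P := fun t => φn t ∈ U t)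
    (fun t => by simp only [hφn t, hUθ t]) (Int.natCast_pos.2 hθ) (fun t ht => ?_) t
  lift t to ℕ using ht.1
  exact hrU t (by exact_mod_cast ht.2) (hφnr t)

theorem perturbed_solutions_are_hyperbolic_general
    {X : Type*} [NormedAddCommGroup X] [NormedSpace ℂ X] [CompleteSpace X]
    (θ₀ θ₁ θ : ℕ) (hθ₀ : 0 < θ₀) (hθ₁ : 0 < θ₁) (hθ : θ = Nat.lcm θ₀ θ₁)
    (U : ℤ → Set X) (hUopen : ∀ t, IsOpen (U t)) (hUper : ∀ t : ℤ, U (t + θ₀) = U t)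
    (F : ℕ → ℤ → X → X) (hFper : ∀ (n : ℕ) (t : ℤ), F n (t + θ₀) = F n t)
    -- (i) every F_t^n is continuously differentiable on U_t
    (hC1 : ∀ (n : ℕ) (t : ℤ), ContDiffOn ℂ 1 (F n t) (U t))
    -- (ii) the family {DF_t^n}_{n∈ℕ} is equicontinuous
    (hequi : ∀ t : ℤ, 0 ≤ t → t < θ₀ → ∀ u ∈ U t, ∀ ε : ℝ, 0 < ε →
      ∃ δ : ℝ, 0 < δ ∧ ∀ n : ℕ, 1 ≤ n → ∀ v ∈ U t, ‖v - u‖ < δ →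
        ‖fderiv ℂ (F n t) v - fderiv ℂ (F n t) u‖ ≤ ε)
    -- φ⁰ is a θ₁-periodic solution of the unperturbed equation
    (φ0 : ℤ → X) (hmem : ∀ t : ℤ, φ0 t ∈ U t)
    (hsol : ∀ t : ℤ, φ0 (t + 1) = F 0 t (φ0 t))
    (hper : ∀ t : ℤ, φ0 (t + θ₁) = φ0 t)
    -- weak hyperbolicity: 1 ∉ σ(Ξ_θ^0)
    (hweak : (1 : ℂ) ∉ spectrum ℂ (prodOp (fun t => fderiv ℂ (F 0 t) (φ0 t)) θ))
    -- hyperbolicity: σ(Ξ_θ^0) ∩ 𝕊¹ = ∅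
    (hhyp : spectrum ℂ (prodOp (fun t => fderiv ℂ (F 0 t) (φ0 t)) θ) ∩
      {z : ℂ | ‖z‖ = 1} = ∅)
    -- consistency assumptions (2.7) and (2.8)
    (Γ₀ : ℝ → ℝ) (hΓ₀nn : ∀ ϱ : ℝ, 0 ≤ Γ₀ ϱ)
    (hΓ₀lim : Tendsto Γ₀ (nhdsWithin 0 (Set.Ioi 0)) (nhds 0))
    (hFconv : ∀ t : ℤ, 0 ≤ t → t < θ → ∀ n : ℕ, 1 ≤ n →
      ‖F n t (φ0 t) - F 0 t (φ0 t)‖ ≤ Γ₀ (1 / (n : ℝ)))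
    (hDconv : ∀ t : ℤ, 0 ≤ t → t < θ →
      Tendsto (fun n : ℕ => ‖fderiv ℂ (F n t) (φ0 t) - fderiv ℂ (F 0 t) (φ0 t)‖)
        atTop (nhds 0)) :
    ∃ ρ₀ : ℝ, 0 < ρ₀ ∧ ∃ K₀ : ℝ, 0 ≤ K₀ ∧ ∃ N₀ : ℕ, 1 ≤ N₀ ∧
      ∀ n : ℕ, N₀ ≤ n → ∃ φn : ℤ → X,
        -- φⁿ is a θ-periodic solution of the n-th equation in B_{ρ₀}(φ⁰)
        (∀ t : ℤ, φn t ∈ U t) ∧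
        (∀ t : ℤ, φn (t + 1) = F n t (φn t)) ∧
        (∀ t : ℤ, φn (t + θ) = φn t) ∧
        (∀ t : ℤ, ‖φn t - φ0 t‖ ≤ ρ₀) ∧
        -- uniqueness among θ-periodic solutions in B_{ρ₀}(φ⁰)
        (∀ ψ : ℤ → X, (∀ t : ℤ, ψ t ∈ U t) → (∀ t : ℤ, ψ (t + 1) = F n t (ψ t)) →
          (∀ t : ℤ, ψ (t + θ) = ψ t) → (∀ t : ℤ, ‖ψ t - φ0 t‖ ≤ ρ₀) → ψ = φn) ∧
        -- convergence estimate (2.9)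
        (∀ t : ℤ, ‖φn t - φ0 t‖ ≤ K₀ * Γ₀ (1 / (n : ℝ))) ∧
        -- φⁿ is hyperbolic as well: σ(Ξ_θ^n) ∩ 𝕊¹ = ∅
        spectrum ℂ (prodOp (fun t => fderiv ℂ (F n t) (φn t)) θ) ∩
          {z : ℂ | ‖z‖ = 1} = ∅ := by
  have hθpos : 0 < θ := hθ ▸ Nat.lcm_pos hθ₀ hθ₁
  have hequi' : ∀ t, ∀ u ∈ U t, ∀ ε > 0, ∃ δ > 0, ∀ᶠ n in atTop, ∀ v ∈ U t,
      dist v u < δ → dist (fderiv ℂ (F n t) v) (fderiv ℂ (F n t) u) ≤ ε := by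
    refine Periodic.forall_of_forall_mem_Ico (fun t => by simp only [hUper, hFper])
      (Int.natCast_pos.2 hθ₀) fun t ht u hu ε hε => ?_
    obtain ⟨δ, hδ, h⟩ := hequi t ht.1 ht.2 u hu ε hε
    exact ⟨δ, hδ, eventually_atTop.2 ⟨1, fun n hn v hv hvu => by
      simpa only [dist_eq_norm] using h n hn v hv (by rwa [← dist_eq_norm])⟩⟩
  have hΓ : Tendsto (fun n : ℕ => Γ₀ (1 / n)) atTop (𝓝 0) :=
    hΓ₀lim.comp (tendsto_nhdsWithin_iff.2 ⟨tendsto_one_div_atTop_nhds_zero_nat,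
      eventually_atTop.2 ⟨1, fun n hn => by simp only [mem_Ioi]; positivity⟩⟩)
  have hS : IsCompact {z : ℂ | ‖z‖ = 1} := by convert isCompact_sphere (0 : ℂ) 1; ext; simp
  obtain ⟨ρ₀, hρ₀, K₀, hK₀, hpersist⟩ := eventually_exists_perturbed_periodic_solution hθpos hUopen
    (Periodic.of_dvd hUper (hθ ▸ Nat.dvd_lcm_left θ₀ θ₁))
    (fun n => Periodic.of_dvd (hFper n) (hθ ▸ Nat.dvd_lcm_left θ₀ θ₁))
    (fun n t => (hC1 n t).differentiableOn one_ne_zero) hequi' hmem hsol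
    (Periodic.of_dvd hper (hθ ▸ Nat.dvd_lcm_right θ₀ θ₁)) hweak hS hhyp (fun n => hΓ₀nn _) hΓ
    (eventually_atTop.2 ⟨1, fun n hn j hj =>
      hFconv j (Int.natCast_nonneg j) (by exact_mod_cast hj) n hn⟩)
    (fun j hj => tendsto_iff_norm_sub_tendsto_zero.2
      (hDconv j (Int.natCast_nonneg j) (by exact_mod_cast hj)))
  obtain ⟨N, hN⟩ := eventually_atTop.1 (hpersist.and (eventually_ge_atTop 1))
  refine ⟨ρ₀, hρ₀, K₀, hK₀, N, (hN N le_rfl).2, fun n hn => ?_⟩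
  obtain ⟨⟨φn, hU, hs, hp, hK, hKρ, huniq, hspec⟩, -⟩ := hN n hn
  exact ⟨φn, hU, hs, hp, fun t => (hK t).trans hKρ, fun ψ _ hψs hψ hψρ => huniq ψ hψ hψs hψρ,
    hK, hspec⟩

/-- Theorem 2.2: persistence of weakly hyperbolic periodic solutions. Under the stated
smoothness, uniform continuity, equicontinuity and compactness assumptions on the
`θ₀`-periodic right-hand sides `F_t^n` and the consistency assumptions
`‖F_t^n(φ_t^0) − F_t^0(φ_t^0)‖ ≤ Γ₀(1/n)`,
`‖DF_t^n(φ_t^0) − DF_t^0(φ_t^0)‖ → 0`, every weakly hyperbolic `θ₁`-periodic solution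
`φ⁰` of the unperturbed equation persists: for every sufficiently large `n` there is a
`θ`-periodic solution `φⁿ` (θ = lcm(θ₀,θ₁)), unique in a `ρ₀`-neighborhood of `φ⁰`,
satisfying `sup_t ‖φ_t^n − φ_t^0‖ ≤ K₀ Γ₀(1/n)`; if `φ⁰` is moreover hyperbolic
(`σ(Ξ_θ^0) ∩ 𝕊¹ = ∅`), then the perturbed solutions `φⁿ` are hyperbolic as well. -/
theorem perturbed_solutions_are_hyperbolic
    {X : Type*} [NormedAddCommGroup X] [NormedSpace ℂ X] [CompleteSpace X]
    (θ₀ θ₁ θ : ℕ) (hθ₀ : 0 < θ₀) (hθ₁ : 0 < θ₁) (hθ : θ = Nat.lcm θ₀ θ₁)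
    (U : ℤ → Set X) (hUopen : ∀ t, IsOpen (U t)) (hUper : ∀ t : ℤ, U (t + θ₀) = U t)
    (F : ℕ → ℤ → X → X) (hFper : ∀ (n : ℕ) (t : ℤ), F n (t + θ₀) = F n t)
    -- (i) every F_t^n is continuously differentiable on U_t
    (hC1 : ∀ (n : ℕ) (t : ℤ), ContDiffOn ℂ 1 (F n t) (U t))
    -- (ii) DF_t^n uniformly continuous on bounded sets, uniformly in n ∈ ℕ
    (hUC : ∀ t : ℤ, 0 ≤ t → t < θ₀ → ∀ B : Set X, B ⊆ U t → Bornology.IsBounded B →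
      ∀ ε : ℝ, 0 < ε → ∃ δ : ℝ, 0 < δ ∧ ∀ n : ℕ, 1 ≤ n → ∀ u ∈ B, ∀ v ∈ B,
        ‖u - v‖ < δ → ‖fderiv ℂ (F n t) u - fderiv ℂ (F n t) v‖ ≤ ε)
    -- (ii) the family {DF_t^n}_{n∈ℕ} is equicontinuous
    (hequi : ∀ t : ℤ, 0 ≤ t → t < θ₀ → ∀ u ∈ U t, ∀ ε : ℝ, 0 < ε →
      ∃ δ : ℝ, 0 < δ ∧ ∀ n : ℕ, 1 ≤ n → ∀ v ∈ U t, ‖v - u‖ < δ →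
        ‖fderiv ℂ (F n t) v - fderiv ℂ (F n t) u‖ ≤ ε)
    -- (ii) for every n there is a time with compact-operator-valued derivative
    (hcomp : ∀ n : ℕ, 1 ≤ n → ∃ t : ℤ, 0 ≤ t ∧ t < θ₀ ∧ ∀ u ∈ U t,
      IsCompactOperator (fderiv ℂ (F n t) u))
    -- φ⁰ is a θ₁-periodic solution of the unperturbed equation
    (φ0 : ℤ → X) (hmem : ∀ t : ℤ, φ0 t ∈ U t)
    (hsol : ∀ t : ℤ, φ0 (t + 1) = F 0 t (φ0 t))
    (hper : ∀ t : ℤ, φ0 (t + θ₁) = φ0 t)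
    -- weak hyperbolicity: 1 ∉ σ(Ξ_θ^0)
    (hweak : (1 : ℂ) ∉ spectrum ℂ (prodOp (fun t => fderiv ℂ (F 0 t) (φ0 t)) θ))
    -- hyperbolicity: σ(Ξ_θ^0) ∩ 𝕊¹ = ∅
    (hhyp : spectrum ℂ (prodOp (fun t => fderiv ℂ (F 0 t) (φ0 t)) θ) ∩
      {z : ℂ | ‖z‖ = 1} = ∅)
    -- consistency assumptions (2.7) and (2.8)
    (Γ₀ : ℝ → ℝ) (hΓ₀nn : ∀ ϱ : ℝ, 0 ≤ Γ₀ ϱ)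
    (hΓ₀lim : Tendsto Γ₀ (nhdsWithin 0 (Set.Ioi 0)) (nhds 0))
    (hFconv : ∀ t : ℤ, 0 ≤ t → t < θ → ∀ n : ℕ, 1 ≤ n →
      ‖F n t (φ0 t) - F 0 t (φ0 t)‖ ≤ Γ₀ (1 / (n : ℝ)))
    (hDconv : ∀ t : ℤ, 0 ≤ t → t < θ →
      Tendsto (fun n : ℕ => ‖fderiv ℂ (F n t) (φ0 t) - fderiv ℂ (F 0 t) (φ0 t)‖)
        atTop (nhds 0)) :
    ∃ ρ₀ : ℝ, 0 < ρ₀ ∧ ∃ K₀ : ℝ, 0 ≤ K₀ ∧ ∃ N₀ : ℕ, 1 ≤ N₀ ∧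
      ∀ n : ℕ, N₀ ≤ n → ∃ φn : ℤ → X,
        -- φⁿ is a θ-periodic solution of the n-th equation in B_{ρ₀}(φ⁰)
        (∀ t : ℤ, φn t ∈ U t) ∧
        (∀ t : ℤ, φn (t + 1) = F n t (φn t)) ∧
        (∀ t : ℤ, φn (t + θ) = φn t) ∧
        (∀ t : ℤ, ‖φn t - φ0 t‖ ≤ ρ₀) ∧
        -- uniqueness among θ-periodic solutions in B_{ρ₀}(φ⁰)
        (∀ ψ : ℤ → X, (∀ t : ℤ, ψ t ∈ U t) → (∀ t : ℤ, ψ (t + 1) = F n t (ψ t)) →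
          (∀ t : ℤ, ψ (t + θ) = ψ t) → (∀ t : ℤ, ‖ψ t - φ0 t‖ ≤ ρ₀) → ψ = φn) ∧
        -- convergence estimate (2.9)
        (∀ t : ℤ, ‖φn t - φ0 t‖ ≤ K₀ * Γ₀ (1 / (n : ℝ))) ∧
        -- φⁿ is hyperbolic as well: σ(Ξ_θ^n) ∩ 𝕊¹ = ∅
        spectrum ℂ (prodOp (fun t => fderiv ℂ (F n t) (φn t)) θ) ∩
          {z : ℂ | ‖z‖ = 1} = ∅ :=
  perturbed_solutions_are_hyperbolic_general θ₀ θ₁ θ hθ₀ hθ₁ hθ U hUopen hUper F hFper hC1 hequi φ0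
    hmem hsol hper hweak hhyp Γ₀ hΓ₀nn hΓ₀lim hFconv hDconv
end
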